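/- arXiv:1402.3697 — 4 statements merged into one kernel-verified Lean document; each statement's English description precedes it below -/
import Mathlib

section
/- The arithmetic function B(q) is multiplicative: if q₁, q₂ ∈ ℕ with gcd(q₁,q₂) = 1 then B(q₁q₂) = B(q₁)·B(q₂). -/
open MeasureTheory Finset
open scoped BigOperators

noncomputable section

/-- `e(z) = exp(2πiz)`. -/
def eF (z : ℝ) : ℂ := Complex.exp (2 * Real.pi * Complex.I * z)

/-- quadratic form `xᵀAx` for an integer matrix. -/
def qfZ {n : ℕ} (A : Matrix (Fin n) (Fin n) ℤ) (x : Fin n → ℤ) : ℤ :=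
  ∑ i, ∑ j, A i j * x i * x j

/-- the complete exponential sum `C(q,a)`. -/
def Cqa {n : ℕ} (A : Matrix (Fin n) (Fin n) ℤ) (q a : ℕ) : ℂ :=
  ∑ h ∈ Fintype.piFinset (fun _ : Fin n => Finset.Icc 1 q),
    if ∀ i, Nat.gcd (h i) q = 1 then
      eF (((qfZ A fun i => (h i : ℤ)) : ℝ) * (a : ℝ) / (q : ℝ)) else 0

/-- `B(q) = φ(q)^{-n} ∑_{(a,q)=1} C(q,a) e(-at/q)`. -/
def Bq {n : ℕ} (A : Matrix (Fin n) (Fin n) ℤ) (t : ℤ) (q : ℕ) : ℂ :=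
  ((Nat.totient q : ℂ) ^ n)⁻¹ *
    ∑ a ∈ Finset.Icc 1 q,
      if Nat.gcd a q = 1 then Cqa A q a * eF (-((a : ℝ) * (t : ℝ)) / (q : ℝ)) else 0

/-!
Identifying `{1, …, q}` with `ZMod q`, the sum `φ(q)ⁿ B(q)` becomes the sum of `ψ_q(α (Q(η) - t))`
over units `α` and vectors of units `η` of `ZMod q`, where `ψ_q` is the standard additive character
and `Q` the quadratic form of `A`. For coprime `q₁, q₂` the Chinese remainder theorem identifies
`ZMod (q₁ q₂)` with `ZMod q₁ × ZMod q₂`, and a Bézout relation `q₁ u + q₂ v = 1` splits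
`ψ_{q₁q₂}` as `ψ_{q₁}(v ·) ψ_{q₂}(u ·)`. As `v` and `u` are units, these twists are absorbed by
substituting `α`, so the sum factors; `φ` is multiplicative as well.
-/

open ZMod

section

variable {n : ℕ} (A : Matrix (Fin n) (Fin n) ℤ) (t : ℤ)

def qf {R : Type*} [CommRing R] (x : Fin n → R) : R :=
  ∑ i, ∑ j, (A i j : R) * x i * x j

lemma map_qf {R S F : Type*} [CommRing R] [CommRing S] [FunLike F R S] [RingHomClass F R S]
    (f : F) (x : Fin n → R) :
    f (qf A x) = qf A (fun i => f (x i)) := by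
  simp [qf]

lemma intCast_qfZ {R : Type*} [CommRing R] (x : Fin n → ℤ) :
    ((qfZ A x : ℤ) : R) = qf A (fun i => (x i : R)) := by
  simp [qfZ, qf]

def unitExpSum (R : Type*) [CommRing R] [Fintype Rˣ] (ψ : R → ℂ) : ℂ :=
  ∑ α : Rˣ, ∑ η : Fin n → Rˣ, ψ (α * (qf A (fun i => (η i : R)) - t))

variable {A t}

lemma unitExpSum_comp_ringEquiv {R S : Type*} [CommRing R] [CommRing S] [Fintype Rˣ]
    [Fintype Sˣ] (e : R ≃+* S) (ψ : S → ℂ) :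
    unitExpSum A t R (ψ ∘ e) = unitExpSum A t S ψ := by
  let u : Rˣ ≃ Sˣ := (Units.mapEquiv e.toMulEquiv).toEquiv
  refine Fintype.sum_equiv u _ _ fun α => ?_
  refine Fintype.sum_equiv (Equiv.piCongrRight fun _ => u) _ _ fun η => ?_
  simp [u, map_qf A e]

lemma unitExpSum_prod {R₁ R₂ : Type*} [CommRing R₁] [CommRing R₂] [Fintype R₁ˣ] [Fintype R₂ˣ]
    [Fintype (R₁ × R₂)ˣ] (ψ₁ : R₁ → ℂ) (ψ₂ : R₂ → ℂ) :
    unitExpSum A t (R₁ × R₂) (fun x => ψ₁ x.1 * ψ₂ x.2) =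
      unitExpSum A t R₁ ψ₁ * unitExpSum A t R₂ ψ₂ := by
  let u : (R₁ × R₂)ˣ ≃ R₁ˣ × R₂ˣ := MulEquiv.prodUnits.toEquiv
  rw [unitExpSum, unitExpSum, unitExpSum, Finset.sum_mul_sum]
  conv_rhs => rw [← Fintype.sum_prod_type']
  refine Fintype.sum_equiv u _ _ fun α => ?_
  conv_rhs => rw [Finset.sum_mul_sum, ← Fintype.sum_prod_type']
  refine Fintype.sum_equiv ((Equiv.piCongrRight fun _ => u).trans
    (Equiv.arrowProdEquivProdArrow _ _ _)) _ _ fun η => ?_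
  have fst_qf (x : Fin n → R₁ × R₂) : (qf A x).1 = qf A (fun i => (x i).1) :=
    map_qf A (RingHom.fst R₁ R₂) x
  have snd_qf (x : Fin n → R₁ × R₂) : (qf A x).2 = qf A (fun i => (x i).2) :=
    map_qf A (RingHom.snd R₁ R₂) x
  simp only [Prod.fst_mul, Prod.snd_mul, Prod.fst_sub, Prod.snd_sub, Prod.fst_intCast,
    Prod.snd_intCast, fst_qf, snd_qf]
  rfl

lemma unitExpSum_mul_left {R : Type*} [CommRing R] [Fintype Rˣ] (w : Rˣ) (ψ : R → ℂ) :
    unitExpSum A t R (fun x => ψ (w * x)) = unitExpSum A t R ψ :=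
  Fintype.sum_bijective (w * ·) (Group.mulLeft_bijective w) _ _ fun α => by
    simp only [Units.val_mul, mul_assoc]

end

section

variable {q : ℕ}

-- `0` is represented by `q`.
def iccRep (x : ZMod q) : ℕ := (x - 1).val + 1

lemma iccRep_mem [NeZero q] (x : ZMod q) : iccRep x ∈ Icc 1 q :=
  mem_Icc.mpr ⟨Nat.le_add_left 1 _, ZMod.val_lt _⟩

lemma natCast_iccRep [NeZero q] (x : ZMod q) : (iccRep x : ZMod q) = x := by
  simp [iccRep]

lemma iccRep_natCast {a : ℕ} (ha : a ∈ Icc 1 q) : iccRep (a : ZMod q) = a := by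
  obtain ⟨h1, h2⟩ := mem_Icc.mp ha
  rw [iccRep, ← Nat.cast_one, ← Nat.cast_sub h1, ZMod.val_natCast_of_lt (by omega)]
  omega

lemma sum_Icc_coprime_eq_sum_units [NeZero q] {M : Type*} [AddCommMonoid M] (f : ZMod q → M) :
    (∑ a ∈ Icc 1 q, if a.gcd q = 1 then f a else 0) = ∑ α : (ZMod q)ˣ, f α := by
  rw [← sum_filter]
  exact sum_bij' (fun a ha => unitOfCoprime a (mem_filter.mp ha).2)
    (fun α _ => iccRep (α : ZMod q))
    (fun _ _ => mem_univ _)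
    (fun α _ => mem_filter.mpr ⟨iccRep_mem _, (isUnit_iff_coprime _ q).mp <| by
      rw [natCast_iccRep]; exact α.isUnit⟩)
    (fun a ha => iccRep_natCast (mem_filter.mp ha).1)
    (fun α _ => Units.ext <| natCast_iccRep _)
    (fun _ _ => rfl)

lemma sum_piFinset_Icc_coprime_eq_sum_units [NeZero q] {ι M : Type*} [Fintype ι] [DecidableEq ι]
    [AddCommMonoid M] (f : (ι → ZMod q) → M) :
    (∑ h ∈ Fintype.piFinset (fun _ : ι => Icc 1 q),
      if ∀ i, (h i).gcd q = 1 then f (fun i => h i) else 0) =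
      ∑ η : ι → (ZMod q)ˣ, f (fun i => η i) := by
  rw [← sum_filter]
  exact sum_bij' (fun h hh i => unitOfCoprime (h i) ((mem_filter.mp hh).2 i))
    (fun η _ i => iccRep (η i : ZMod q))
    (fun _ _ => mem_univ _)
    (fun η _ => mem_filter.mpr ⟨Fintype.mem_piFinset.mpr fun _ => iccRep_mem _,
      fun i => (isUnit_iff_coprime _ q).mp <| by rw [natCast_iccRep]; exact (η i).isUnit⟩)
    (fun h hh => funext fun i =>
      iccRep_natCast (Fintype.mem_piFinset.mp (mem_filter.mp hh).1 i))
    (fun η _ => funext fun i => Units.ext <| natCast_iccRep _)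
    (fun _ _ => rfl)

end

lemma eF_add (x y : ℝ) : eF (x + y) = eF x * eF y := by
  rw [eF, eF, eF, ← Complex.exp_add]
  push_cast
  ring_nf

lemma eF_intCast_div (q : ℕ) [NeZero q] (m : ℤ) : eF (m / q) = stdAddChar (m : ZMod q) := by
  rw [eF, stdAddChar_coe]
  push_cast
  ring_nf

section

variable {n : ℕ} {A : Matrix (Fin n) (Fin n) ℤ} {t : ℤ}

lemma Cqa_mul_eF (q a : ℕ) [NeZero q] :
    Cqa A q a * eF (-((a : ℝ) * t) / q) =
      ∑ η : Fin n → (ZMod q)ˣ,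
        stdAddChar ((a : ZMod q) * (qf A (fun i => (η i : ZMod q)) - (t : ZMod q))) := by
  rw [Cqa, sum_mul, ← sum_piFinset_Icc_coprime_eq_sum_units fun x : Fin n → ZMod q =>
    stdAddChar ((a : ZMod q) * (qf A x - (t : ZMod q)))]
  refine sum_congr rfl fun h _ => ?_
  split_ifs
  · have : ((qfZ A fun i => (h i : ℤ)) : ℝ) * a / q + -(a * t) / q =
        ((a * (qfZ A (fun i => (h i : ℤ)) - t) : ℤ) : ℝ) / q := by
      push_cast
      ring
    rw [← eF_add, this, eF_intCast_div, Int.cast_mul, Int.cast_sub, intCast_qfZ]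
    simp only [Int.cast_natCast]
  · rw [zero_mul]

lemma Bq_eq_unitExpSum (q : ℕ) [NeZero q] :
    Bq A t q = ((q.totient : ℂ) ^ n)⁻¹ * unitExpSum A t (ZMod q) stdAddChar := by
  rw [Bq, unitExpSum, ← sum_Icc_coprime_eq_sum_units fun x : ZMod q =>
    ∑ η : Fin n → (ZMod q)ˣ, stdAddChar (x * (qf A (fun i => (η i : ZMod q)) - (t : ZMod q)))]
  congr 1
  refine sum_congr rfl fun a _ => ?_
  split_ifs
  · exact Cqa_mul_eF q a
  · rfl

lemma Bq_zero : Bq A t 0 = 0 := by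
  simp [Bq]

lemma exists_units_stdAddChar_eq_mul {q₁ q₂ : ℕ} [NeZero q₁] [NeZero q₂] (h : q₁.Coprime q₂) :
    ∃ (w₁ : (ZMod q₁)ˣ) (w₂ : (ZMod q₂)ˣ), ∀ x : ZMod (q₁ * q₂),
      stdAddChar x = stdAddChar ((w₁ : ZMod q₁) * (chineseRemainder h x).1) *
        stdAddChar ((w₂ : ZMod q₂) * (chineseRemainder h x).2) := by
  set u := q₁.gcdA q₂
  set v := q₁.gcdB q₂
  have bezout : (q₁ * u + q₂ * v : ℤ) = 1 := by
    rw [← Nat.gcd_eq_gcd_ab, h, Nat.cast_one]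
  have hv : (q₂ : ZMod q₁) * v = 1 := by
    simpa using congrArg (Int.cast : ℤ → ZMod q₁) bezout
  have hu : (q₁ : ZMod q₂) * u = 1 := by
    simpa using congrArg (Int.cast : ℤ → ZMod q₂) bezout
  refine ⟨(IsUnit.of_mul_eq_one_right _ hv).unit, (IsUnit.of_mul_eq_one_right _ hu).unit,
    fun x => ?_⟩
  obtain ⟨m, rfl⟩ := ZMod.intCast_surjective x
  simp only [IsUnit.unit_spec, map_intCast, Prod.fst_intCast, Prod.snd_intCast]
  rw [← Int.cast_mul, ← Int.cast_mul, ← eF_intCast_div, ← eF_intCast_div, ← eF_intCast_div,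
    ← eF_add]
  congr 1
  have : ((q₁ * u + q₂ * v : ℤ) : ℝ) = 1 := by exact_mod_cast bezout
  have hq₁ : (q₁ : ℝ) ≠ 0 := Nat.cast_ne_zero.mpr (NeZero.ne q₁)
  have hq₂ : (q₂ : ℝ) ≠ 0 := Nat.cast_ne_zero.mpr (NeZero.ne q₂)
  push_cast at this ⊢
  rw [div_add_div _ _ hq₁ hq₂, div_eq_div_iff (mul_ne_zero hq₁ hq₂) (mul_ne_zero hq₁ hq₂)]
  linear_combination -((m : ℝ) * q₁ * q₂) * this

lemma unitExpSum_stdAddChar_mul {q₁ q₂ : ℕ} [NeZero q₁] [NeZero q₂] (h : q₁.Coprime q₂) :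
    unitExpSum A t (ZMod (q₁ * q₂)) stdAddChar =
      unitExpSum A t (ZMod q₁) stdAddChar * unitExpSum A t (ZMod q₂) stdAddChar := by
  obtain ⟨w₁, w₂, hw⟩ := exists_units_stdAddChar_eq_mul h
  calc unitExpSum A t (ZMod (q₁ * q₂)) stdAddChar
      = unitExpSum A t (ZMod (q₁ * q₂))
          ((fun y => stdAddChar ((w₁ : ZMod q₁) * y.1) * stdAddChar ((w₂ : ZMod q₂) * y.2)) ∘
            chineseRemainder h) :=
        congrArg (unitExpSum A t _) (funext hw)
    _ = unitExpSum A t (ZMod q₁ × ZMod q₂)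
          (fun y => stdAddChar ((w₁ : ZMod q₁) * y.1) * stdAddChar ((w₂ : ZMod q₂) * y.2)) :=
        unitExpSum_comp_ringEquiv _ _
    _ = unitExpSum A t (ZMod q₁) stdAddChar * unitExpSum A t (ZMod q₂) stdAddChar := by
        rw [unitExpSum_prod (fun y => stdAddChar ((w₁ : ZMod q₁) * y))
          (fun y => stdAddChar ((w₂ : ZMod q₂) * y)),
          unitExpSum_mul_left, unitExpSum_mul_left]

end

theorem statement2_general {n : ℕ} (A : Matrix (Fin n) (Fin n) ℤ) (t : ℤ)
    (q₁ q₂ : ℕ) (hcop : Nat.gcd q₁ q₂ = 1) :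
    Bq A t (q₁ * q₂) = Bq A t q₁ * Bq A t q₂ := by
  rcases Nat.eq_zero_or_pos q₁ with rfl | hq₁
  · simp [Bq_zero]
  rcases Nat.eq_zero_or_pos q₂ with rfl | hq₂
  · simp [Bq_zero]
  have : NeZero q₁ := ⟨hq₁.ne'⟩
  have : NeZero q₂ := ⟨hq₂.ne'⟩
  rw [Bq_eq_unitExpSum, Bq_eq_unitExpSum, Bq_eq_unitExpSum, unitExpSum_stdAddChar_mul hcop,
    Nat.totient_mul hcop, Nat.cast_mul, mul_pow, mul_inv]
  ring

/-- The arithmetic function `B(q)` is multiplicative. -/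
theorem statement2 {n : ℕ} (A : Matrix (Fin n) (Fin n) ℤ) (hsymm : A.IsSymm) (t : ℤ)
    (q₁ q₂ : ℕ) (hq₁ : 1 ≤ q₁) (hq₂ : 1 ≤ q₂) (hcop : Nat.gcd q₁ q₂ = 1) :
    Bq A t (q₁ * q₂) = Bq A t q₁ * Bq A t q₂ :=
  statement2_general A t q₁ q₂ hcop
end
end

section
/- Let C be a k×m matrix with rational entries and rank(C) ≥ 2. Then for every X ≥ 2, the number of pairs of integer vectors x ∈ ℤ^k, y ∈ ℤ^m with |x_i| ≤ X for all i, |y_j| ≤ X for all j, and xᵀCy = 0 is ≪ X^{k+m−2} log X, where the implied constant depends only on C. -/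
/-!
Clear denominators, so that `C` becomes an integer matrix `D` with a nonzero `2 × 2` minor in
rows `i₁, i₂` and columns `j₁, j₂`. Fix `x` and put `u = (xᵀD)_{j₁}`, `v = (xᵀD)_{j₂}`. Once all
coordinates of `y` other than `y_{j₁}, y_{j₂}` are frozen, `xᵀDy = 0` becomes a line
`u s + v t = c`, which meets the square `[-X, X]²` in at most `2X gcd(u, v) / max(|u|, |v|) + 2`
points. The nonzero minor makes `x ↦ (u, v)` at most `(2X + 1)^(k-2)`-to-one, so summing over `x`
leaves `∑_{|u|, |v| ≤ KX} gcd(u, v) / max(|u|, |v|) ≪ X log X`, which follows by grouping the pairs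
by their gcd and summing a harmonic series. The `x` with `u = v = 0` number at most
`(2X + 1)^(k-2)`, and each contributes at most `(2X + 1)^m`.
-/

open Finset Matrix

theorem Matrix.exists_minor_two_ne_zero_of_two_le_rank {K ι κ : Type*} [Field K] [Fintype κ]
    (C : Matrix ι κ K) (hC : 2 ≤ C.rank) :
    ∃ i₁ i₂ j₁ j₂, C i₁ j₁ * C i₂ j₂ - C i₁ j₂ * C i₂ j₁ ≠ 0 := by
  by_contra! hminor
  obtain ⟨i₀, j₀, h₀⟩ : ∃ i j, C i j ≠ 0 := by
    by_contra! hzero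
    rw [show C = 0 from Matrix.ext hzero, Matrix.rank_zero] at hC
    omega
  have hC1 : C = Matrix.vecMulVec (fun i => C i j₀) (fun j => C i₀ j / C i₀ j₀) := by
    ext i j
    rw [Matrix.vecMulVec_apply, mul_div_assoc', eq_div_iff h₀]
    linear_combination hminor i i₀ j j₀
  have := Matrix.rank_vecMulVec_le (fun i => C i j₀) (fun j => C i₀ j / C i₀ j₀)
  rw [← hC1] at this
  omega

theorem Matrix.exists_intCast_eq_mul {ι κ : Type*} [Finite ι] [Finite κ] (C : Matrix ι κ ℚ) :
    ∃ (b : ℤ) (D : Matrix ι κ ℤ), b ≠ 0 ∧ ∀ i j, (D i j : ℚ) = b * C i j := by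
  obtain ⟨⟨b, hb⟩, hD⟩ := IsLocalization.exist_integer_multiples_of_finite (nonZeroDivisors ℤ)
    fun p : ι × κ => C p.1 p.2
  choose D hD using hD
  exact ⟨b, fun i j => D (i, j), nonZeroDivisors.ne_zero hb, fun i j => by simpa using hD (i, j)⟩

theorem Matrix.sum_sum_mul_mul_eq_vecMul_dotProduct {ι κ : Type*} [Fintype ι] [Fintype κ]
    {C : Matrix ι κ ℚ} {D : Matrix ι κ ℤ} {b : ℤ} (hD : ∀ i j, (D i j : ℚ) = b * C i j)
    (x : ι → ℤ) (y : κ → ℤ) :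
    b * ∑ i, ∑ j, C i j * (x i : ℚ) * (y j : ℚ) = ((x ᵥ* D ⬝ᵥ y : ℤ) : ℚ) := by
  simp only [dotProduct, vecMul, Int.cast_sum, Int.cast_mul, hD, sum_mul, mul_sum]
  rw [sum_comm]
  exact sum_congr rfl fun i _ => sum_congr rfl fun j _ => by ring

theorem Matrix.exists_int_minor_ne_zero_of_two_le_rank {ι κ : Type*} [Fintype ι] [Fintype κ]
    (C : Matrix ι κ ℚ) (hC : 2 ≤ C.rank) :
    ∃ (D : Matrix ι κ ℤ) (i₁ i₂ : ι) (j₁ j₂ : κ),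
      D i₁ j₁ * D i₂ j₂ - D i₁ j₂ * D i₂ j₁ ≠ 0 ∧
      ∀ x y, ∑ i, ∑ j, C i j * (x i : ℚ) * (y j : ℚ) = 0 ↔ x ᵥ* D ⬝ᵥ y = 0 := by
  obtain ⟨i₁, i₂, j₁, j₂, hminor⟩ := C.exists_minor_two_ne_zero_of_two_le_rank hC
  obtain ⟨b, D, hb, hD⟩ := C.exists_intCast_eq_mul
  have hb' : (b : ℚ) ≠ 0 := Int.cast_ne_zero.2 hb
  refine ⟨D, i₁, i₂, j₁, j₂, ?_, fun x y => ?_⟩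
  · have : ((D i₁ j₁ * D i₂ j₂ - D i₁ j₂ * D i₂ j₁ : ℤ) : ℚ) =
        b ^ 2 * (C i₁ j₁ * C i₂ j₂ - C i₁ j₂ * C i₂ j₁) := by push_cast [hD]; ring
    exact_mod_cast this ▸ mul_ne_zero (pow_ne_zero 2 hb') hminor
  · rw [← mul_right_inj' hb', mul_zero, sum_sum_mul_mul_eq_vecMul_dotProduct hD,
      Int.cast_eq_zero]

theorem Int.card_Icc_neg_natCast (B : ℕ) : #(Icc (-(B : ℤ)) B) = 2 * B + 1 := by
  rw [Int.card_Icc]; omega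

theorem card_piFinset_Icc_neg_natCast (T : Type*) [Fintype T] [DecidableEq T] (B : ℕ) :
    #(Fintype.piFinset fun _ : T => Icc (-(B : ℤ)) B) = (2 * B + 1) ^ Fintype.card T := by
  rw [Fintype.card_piFinset, prod_const, card_univ, Int.card_Icc_neg_natCast]

theorem Finset.card_filter_product_eq_sum {α β : Type*} (s : Finset α) (t : Finset β)
    (P : α → β → Prop) [∀ x y, Decidable (P x y)] :
    #{p ∈ s ×ˢ t | P p.1 p.2} = ∑ x ∈ s, #{y ∈ t | P x y} := by
  rw [card_filter, sum_product]; simp_rw [card_filter]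

theorem Finset.card_le_pow_mul_of_card_fiber_le {ι α : Type*} [Fintype ι] [DecidableEq ι]
    [DecidableEq α] (T : Finset ι) (s : Finset α) (S : Finset (ι → α))
    (hS : S ⊆ Fintype.piFinset fun _ => s) {M : ℝ} (hM₀ : 0 ≤ M)
    (hM : ∀ y₀ ∈ S, (#{y ∈ S | ∀ j ∉ T, y j = y₀ j} : ℝ) ≤ M) :
    (#S : ℝ) ≤ #s ^ (Fintype.card ι - #T) * M := by
  let π : (ι → α) → (↥Tᶜ → α) := fun y j => y j
  have hmaps : ∀ y ∈ S, π y ∈ Fintype.piFinset fun _ : ↥Tᶜ => s := fun y hy =>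
    Fintype.mem_piFinset.2 fun j => Fintype.mem_piFinset.1 (hS hy) j
  have hfiber : ∀ r, (#{y ∈ S | π y = r} : ℝ) ≤ M := by
    intro r
    obtain hempty | ⟨y₀, hy₀⟩ := Finset.eq_empty_or_nonempty {y ∈ S | π y = r}
    · simpa [hempty] using hM₀
    rw [mem_filter] at hy₀
    refine le_trans (Nat.cast_le.2 (card_le_card fun y hy => ?_)) (hM y₀ hy₀.1)
    rw [mem_filter] at hy ⊢
    exact ⟨hy.1, fun j hj => congrFun (hy.2.trans hy₀.2.symm) ⟨j, mem_compl.2 hj⟩⟩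
  rw [card_eq_sum_card_fiberwise hmaps, Nat.cast_sum]
  calc _ ≤ ∑ _r ∈ Fintype.piFinset (fun _ : ↥Tᶜ => s), M := sum_le_sum fun r _ => hfiber r
    _ = _ := by
      rw [sum_const, nsmul_eq_mul, Fintype.card_piFinset, prod_const, card_univ,
        Fintype.card_coe, card_compl, Nat.cast_pow]

theorem Int.card_Icc_filter_modEq_le {a b : ℤ} (hab : a ≤ b) (v : ℤ) {r : ℤ} (hr : 0 < r) :
    (#{x ∈ Icc a b | x ≡ v [ZMOD r]} : ℝ) ≤ (b - a) / r + 2 := by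
  have hr' : (0 : ℚ) < r := by exact_mod_cast hr
  have key : ((#{x ∈ Ico a (b + 1) | x ≡ v [ZMOD r]} : ℤ) : ℚ) ≤ (b - a) / r + 2 := by
    rw [Int.Ico_filter_modEq_card a (b + 1) hr v, Int.cast_max, Int.cast_zero, max_le_iff]
    have hba : (0 : ℚ) ≤ (b - a) / r := div_nonneg (by exact_mod_cast sub_nonneg.2 hab) hr'.le
    refine ⟨?_, by linarith⟩
    have h1 := Int.ceil_lt_add_one (((b + 1 : ℤ) - v : ℚ) / r)
    have h2 := Int.le_ceil (((a : ℤ) - v : ℚ) / r)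
    have h3 : (1 : ℚ) / r ≤ 1 := by rw [div_le_one hr']; exact_mod_cast hr
    have : ((b + 1 - v) / r : ℚ) - (a - v) / r = (b - a) / r + 1 / r := by ring
    push_cast at h1 h2 ⊢
    linarith
  rw [← Finset.Ico_add_one_right_eq_Icc]
  exact_mod_cast key

theorem Int.div_gcd_dvd_of_mul_add_mul_eq_zero {u v a b : ℤ} (hu : u ≠ 0)
    (h : u * a + v * b = 0) : u / Int.gcd u v ∣ b := by
  have hg : (Int.gcd u v : ℤ) ≠ 0 := by
    have := Int.gcd_pos_of_ne_zero_left v hu; positivity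
  obtain ⟨q, hq⟩ := Int.gcd_dvd_left u v
  obtain ⟨r, hr⟩ := Int.gcd_dvd_right u v
  have hcop := Int.gcd_div_gcd_div_gcd (Int.gcd_pos_of_ne_zero_left v hu)
  rw [Int.ediv_eq_of_eq_mul_right hg hq, Int.ediv_eq_of_eq_mul_right hg hr] at hcop
  rw [Int.ediv_eq_of_eq_mul_right hg hq]
  have : (Int.gcd u v : ℤ) * (q * a + r * b) = 0 := by linear_combination h - a * hq - b * hr
  exact Int.dvd_of_dvd_mul_right_of_gcd_one ⟨-a, by
    linear_combination (mul_eq_zero.1 this).resolve_left hg⟩ hcop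

theorem Int.card_filter_mul_add_mul_eq_le {u : ℤ} (hu : u ≠ 0) (v c : ℤ) (B : ℕ) :
    (#{p ∈ Icc (-(B : ℤ)) B ×ˢ Icc (-(B : ℤ)) B | u * p.1 + v * p.2 = c} : ℝ) ≤
      2 * B * Int.gcd u v / |u| + 2 := by
  set L := {p ∈ Icc (-(B : ℤ)) B ×ˢ Icc (-(B : ℤ)) B | u * p.1 + v * p.2 = c}
  obtain hL | ⟨p₀, hp₀⟩ := L.eq_empty_or_nonempty
  · rw [hL, card_empty, Nat.cast_zero]; positivity
  have hg : 0 < Int.gcd u v := Int.gcd_pos_of_ne_zero_left v hu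
  obtain ⟨q, hq⟩ := Int.gcd_dvd_left u v
  have hq0 : 0 < |q| := abs_pos.2 (right_ne_zero_of_mul (hq ▸ hu))
  have hcard : #L ≤ #{t ∈ Icc (-(B : ℤ)) B | t ≡ p₀.2 [ZMOD |q|]} := by
    rw [mem_filter] at hp₀
    refine card_le_card_of_injOn Prod.snd (fun p hp => ?_) (fun p hp p' hp' h => ?_)
    · rw [mem_coe, mem_filter, mem_product] at hp
      rw [mem_coe, mem_filter, Int.modEq_iff_dvd, abs_dvd,
        ← Int.ediv_eq_of_eq_mul_right (by positivity) hq]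
      refine ⟨hp.1.2, Int.div_gcd_dvd_of_mul_add_mul_eq_zero hu (a := p₀.1 - p.1) ?_⟩
      linear_combination hp₀.2 - hp.2
    · rw [mem_coe, mem_filter] at hp hp'
      have : u * (p.1 - p'.1) = 0 := by linear_combination hp.2 - hp'.2 - v * h
      exact Prod.ext (sub_eq_zero.1 ((mul_eq_zero.1 this).resolve_left hu)) h
  have hu' : |u| = Int.gcd u v * |q| := by
    conv_lhs => rw [hq]
    rw [abs_mul, Nat.abs_cast]
  calc (#L : ℝ) ≤ _ := Nat.cast_le.2 hcard
    _ ≤ ((B : ℤ) - (-(B : ℤ) : ℤ) : ℝ) / (|q| : ℤ) + 2 :=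
      Int.card_Icc_filter_modEq_le (a := -(B : ℤ)) (b := B) (by omega) _ hq0
    _ = _ := by
      have : (0 : ℝ) < Int.gcd u v := by exact_mod_cast hg
      rw [hu']; push_cast; field_simp; ring

-- `2 * B * gcdDivMax u v + 2` bounds the points of `[-B, B]²` on a line `u * s + v * t = c`.
-- Division by zero makes `gcdDivMax 0 0 = 0`.
noncomputable def gcdDivMax (u v : ℤ) : ℝ := Int.gcd u v / max |u| |v|

theorem gcdDivMax_nonneg (u v : ℤ) : 0 ≤ gcdDivMax u v := by unfold gcdDivMax; positivity

theorem gcdDivMax_eq_inv (u v : ℤ) :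
    gcdDivMax u v = ((max |u / Int.gcd u v| |v / Int.gcd u v| : ℤ) : ℝ)⁻¹ := by
  rcases Nat.eq_zero_or_pos (Int.gcd u v) with hg | hg
  · simp [gcdDivMax, hg]
  obtain ⟨a, ha⟩ := Int.gcd_dvd_left u v
  obtain ⟨b, hb⟩ := Int.gcd_dvd_right u v
  rw [gcdDivMax]
  generalize Int.gcd u v = g at *
  subst ha hb
  have hg' : (g : ℤ) ≠ 0 := by positivity
  rw [Int.mul_ediv_cancel_left _ hg', Int.mul_ediv_cancel_left _ hg', abs_mul, abs_mul,
    Nat.abs_cast, ← mul_max_of_nonneg _ _ (by positivity)]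
  push_cast
  rw [div_mul_eq_div_div, div_self (by positivity), one_div]

theorem card_filter_mul_add_mul_eq_le_gcdDivMax {u v : ℤ} (huv : u ≠ 0 ∨ v ≠ 0) (c : ℤ)
    (B : ℕ) :
    (#{p ∈ Icc (-(B : ℤ)) B ×ˢ Icc (-(B : ℤ)) B | u * p.1 + v * p.2 = c} : ℝ) ≤
      2 * B * gcdDivMax u v + 2 := by
  rw [gcdDivMax, ← mul_div_assoc]
  rcases le_total |v| |u| with h | h
  · rw [max_eq_left h]
    exact Int.card_filter_mul_add_mul_eq_le (by rintro rfl; simp_all) v c B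
  · have hswap : #{p ∈ Icc (-(B : ℤ)) B ×ˢ Icc (-(B : ℤ)) B | u * p.1 + v * p.2 = c} =
        #{p ∈ Icc (-(B : ℤ)) B ×ˢ Icc (-(B : ℤ)) B | v * p.1 + u * p.2 = c} :=
      card_nbij' Prod.swap Prod.swap (by intro p; simp [add_comm, and_comm])
        (by intro p; simp [add_comm, and_comm]) (fun _ _ => rfl) (fun _ _ => rfl)
    rw [max_eq_right h, hswap, Int.gcd_comm]
    exact Int.card_filter_mul_add_mul_eq_le (by rintro rfl; simp_all) u c B

theorem card_dotProduct_eq_zero_le_of_ne_zero {κ : Type*} [Fintype κ] [DecidableEq κ]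
    (w : κ → ℤ) {j₁ j₂ : κ} (hj : j₁ ≠ j₂) (hw : w j₁ ≠ 0 ∨ w j₂ ≠ 0) (B : ℕ) :
    (#{y ∈ Fintype.piFinset fun _ => Icc (-(B : ℤ)) B | w ⬝ᵥ y = 0} : ℝ) ≤
      (2 * B + 1) ^ (Fintype.card κ - 2) * (2 * B * gcdDivMax (w j₁) (w j₂) + 2) := by
  have hbox : ((#(Icc (-(B : ℤ)) B) : ℕ) : ℝ) = 2 * B + 1 := by
    rw [Int.card_Icc_neg_natCast]; push_cast; ring
  have hM₀ : 0 ≤ 2 * B * gcdDivMax (w j₁) (w j₂) + 2 := by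
    have := gcdDivMax_nonneg (w j₁) (w j₂); positivity
  have key := card_le_pow_mul_of_card_fiber_le {j₁, j₂} (Icc (-(B : ℤ)) B)
    {y ∈ Fintype.piFinset fun _ => Icc (-(B : ℤ)) B | w ⬝ᵥ y = 0} (filter_subset _ _) hM₀
  rw [card_pair hj, hbox] at key
  refine key fun y₀ _ => ?_
  refine le_trans ?_ (card_filter_mul_add_mul_eq_le_gcdDivMax hw
    (-∑ j ∈ {j₁, j₂}ᶜ, w j * y₀ j) B)
  gcongr
  refine card_le_card_of_injOn (fun y => (y j₁, y j₂)) (fun y hy => ?_)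
    (fun y hy y' hy' h => ?_)
  · rw [mem_coe, mem_filter, mem_filter, Fintype.mem_piFinset] at hy
    rw [mem_coe, mem_filter, mem_product]
    refine ⟨⟨hy.1.1 j₁, hy.1.1 j₂⟩, ?_⟩
    have hsplit := sum_add_sum_compl {j₁, j₂} fun j => w j * y j
    rw [sum_pair hj, ← dotProduct, hy.1.2, sum_congr rfl fun j hj => by
      rw [hy.2 j (mem_compl.1 hj)]] at hsplit
    linear_combination hsplit
  · rw [mem_coe, mem_filter] at hy hy'
    simp only [Prod.mk.injEq] at h
    funext j
    by_cases hjT : j ∈ ({j₁, j₂} : Finset κ)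
    · rcases mem_insert.1 hjT with rfl | hj₂
      · exact h.1
      · rw [mem_singleton.1 hj₂]; exact h.2
    · rw [hy.2 j hjT, hy'.2 j hjT]

theorem card_dotProduct_eq_zero_le {κ : Type*} [Fintype κ] [DecidableEq κ] (w : κ → ℤ)
    {j₁ j₂ : κ} (hj : j₁ ≠ j₂) (B : ℕ) :
    (#{y ∈ Fintype.piFinset fun _ => Icc (-(B : ℤ)) B | w ⬝ᵥ y = 0} : ℝ) ≤
      (2 * B + 1) ^ (Fintype.card κ - 2) * (2 * B * gcdDivMax (w j₁) (w j₂) + 2) +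
        if (w j₁, w j₂) = 0 then (2 * B + 1 : ℝ) ^ Fintype.card κ else 0 := by
  split_ifs with hw
  · have hcard := card_le_card (filter_subset (fun y => w ⬝ᵥ y = 0)
      (Fintype.piFinset fun _ : κ => Icc (-(B : ℤ)) B))
    rw [card_piFinset_Icc_neg_natCast] at hcard
    have := gcdDivMax_nonneg (w j₁) (w j₂)
    refine le_add_of_nonneg_of_le (by positivity) ?_
    exact_mod_cast hcard
  · rw [add_zero]
    exact card_dotProduct_eq_zero_le_of_ne_zero w hj
      (not_and_or.1 fun h => hw (Prod.ext h.1 h.2)) B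

theorem Matrix.vecMul_apply_eq_add_of_eq_zero {ι κ : Type*} [Fintype ι] (D : Matrix ι κ ℤ)
    {i₁ i₂ : ι} (hi : i₁ ≠ i₂) {d : ι → ℤ} (hd : ∀ i, i ≠ i₁ → i ≠ i₂ → d i = 0) (j : κ) :
    (d ᵥ* D) j = d i₁ * D i₁ j + d i₂ * D i₂ j :=
  Fintype.sum_eq_add i₁ i₂ hi fun i hi' => by simp [hd i hi'.1 hi'.2]

theorem Matrix.card_filter_vecMul_eq_le {ι κ : Type*} [Fintype ι] [DecidableEq ι]
    (D : Matrix ι κ ℤ) {i₁ i₂ : ι} {j₁ j₂ : κ} (hD : D i₁ j₁ * D i₂ j₂ - D i₁ j₂ * D i₂ j₁ ≠ 0)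
    (s : Finset ℤ) (p : ℤ × ℤ) :
    #{x ∈ Fintype.piFinset (fun _ => s) | ((x ᵥ* D) j₁, (x ᵥ* D) j₂) = p} ≤
      #s ^ (Fintype.card ι - 2) := by
  have hi : i₁ ≠ i₂ := by rintro rfl; exact hD (by ring)
  have key := card_le_pow_mul_of_card_fiber_le {i₁, i₂} s
    {x ∈ Fintype.piFinset (fun _ => s) | ((x ᵥ* D) j₁, (x ᵥ* D) j₂) = p} (filter_subset _ _)
    zero_le_one fun x₀ _ => by
      refine Nat.cast_le_one.2 (card_le_one.2 fun x hx x' hx' => ?_)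
      simp only [mem_filter, Prod.ext_iff] at hx hx'
      have hd : ∀ i, i ≠ i₁ → i ≠ i₂ → (x - x') i = 0 := fun i h₁ h₂ => by
        rw [Pi.sub_apply, hx.2 i (by simp [h₁, h₂]), hx'.2 i (by simp [h₁, h₂]), sub_self]
      have e₁ := D.vecMul_apply_eq_add_of_eq_zero hi hd j₁
      have e₂ := D.vecMul_apply_eq_add_of_eq_zero hi hd j₂
      rw [Matrix.sub_vecMul, Pi.sub_apply, hx.1.2.1, hx'.1.2.1, sub_self] at e₁
      rw [Matrix.sub_vecMul, Pi.sub_apply, hx.1.2.2, hx'.1.2.2, sub_self] at e₂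
      have h₁ : (x - x') i₁ = 0 := by
        refine (mul_eq_zero.1 ?_).resolve_left hD
        linear_combination D i₂ j₁ * e₂ - D i₂ j₂ * e₁
      have h₂ : (x - x') i₂ = 0 := by
        refine (mul_eq_zero.1 ?_).resolve_left hD
        linear_combination D i₁ j₂ * e₁ - D i₁ j₁ * e₂
      funext i
      rw [← sub_eq_zero, ← Pi.sub_apply]
      by_cases h₁' : i = i₁
      · rwa [h₁']
      by_cases h₂' : i = i₂
      · rwa [h₂']
      exact hd i h₁' h₂'
  rw [card_pair hi, mul_one] at key
  exact_mod_cast key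

theorem Matrix.abs_vecMul_le {ι κ : Type*} [Fintype ι] (D : Matrix ι κ ℤ) {B : ℤ} {x : ι → ℤ}
    (hx : ∀ i, |x i| ≤ B) (j : κ) : |(x ᵥ* D) j| ≤ B * ∑ i, |D i j| := by
  rw [mul_sum]
  refine (abs_sum_le_sum_abs _ _).trans (sum_le_sum fun i _ => ?_)
  rw [abs_mul]
  exact mul_le_mul_of_nonneg_right (hx i) (abs_nonneg _)

theorem sum_inv_max_abs_le (Z : ℕ) :
    ∑ q ∈ Icc (-(Z : ℤ)) Z ×ˢ Icc (-(Z : ℤ)) Z, ((max |q.1| |q.2| : ℤ) : ℝ)⁻¹ ≤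
      6 * (2 * Z + 1) := by
  let f : ℤ → ℤ → ℝ := fun u v => if |v| ≤ |u| then ((|u| : ℤ) : ℝ)⁻¹ else 0
  have hf : ∀ u v, 0 ≤ f u v := fun u v => by unfold f; split_ifs <;> positivity
  have hsplit : ∀ u v : ℤ, ((max |u| |v| : ℤ) : ℝ)⁻¹ ≤ f u v + f v u := fun u v => by
    rcases le_total |v| |u| with h | h
    · rw [max_eq_left h]
      simpa [f, h] using hf v u
    · rw [max_eq_right h]
      simpa [f, h] using hf u v
  have hrow : ∀ u : ℤ, ∑ v ∈ Icc (-(Z : ℤ)) Z, f u v ≤ 3 := fun u => by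
    have hcard : #{v ∈ Icc (-(Z : ℤ)) Z | |v| ≤ |u|} ≤ 2 * u.natAbs + 1 := by
      rw [← Int.card_Icc_neg_natCast]
      refine card_le_card fun v hv => ?_
      rw [mem_filter, ← Int.natCast_natAbs u] at hv
      exact mem_Icc.2 (abs_le.1 hv.2)
    simp only [f]
    rw [← sum_filter, sum_const, nsmul_eq_mul]
    rcases eq_or_ne u 0 with rfl | hu
    · simp
    have hu' : (1 : ℝ) ≤ ((|u| : ℤ) : ℝ) := by exact_mod_cast Int.one_le_abs hu
    calc _ ≤ (2 * ((|u| : ℤ) : ℝ) + 1) * ((|u| : ℤ) : ℝ)⁻¹ := by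
          gcongr
          rw [← Int.natCast_natAbs]
          exact_mod_cast hcard
      _ = 2 + ((|u| : ℤ) : ℝ)⁻¹ := by field_simp
      _ ≤ 3 := by linarith [inv_le_one_of_one_le₀ hu']
  calc _ ≤ ∑ q ∈ Icc (-(Z : ℤ)) Z ×ˢ Icc (-(Z : ℤ)) Z, (f q.1 q.2 + f q.2 q.1) :=
        sum_le_sum fun q _ => hsplit q.1 q.2
    _ = 2 * ∑ u ∈ Icc (-(Z : ℤ)) Z, ∑ v ∈ Icc (-(Z : ℤ)) Z, f u v := by
        rw [sum_add_distrib, sum_product, sum_product_right, two_mul]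
    _ ≤ 2 * ∑ u ∈ Icc (-(Z : ℤ)) Z, 3 := by gcongr with u; exact hrow u
    _ = 6 * (2 * Z + 1) := by
        rw [sum_const, Int.card_Icc_neg_natCast, nsmul_eq_mul]; push_cast; ring

theorem Int.gcd_le_of_abs_le {u v : ℤ} {Y : ℕ} (hu : |u| ≤ Y) (hv : |v| ≤ Y) :
    Int.gcd u v ≤ Y := by
  rw [← Int.natCast_natAbs] at hu hv
  rcases eq_or_ne u 0 with rfl | hu0
  · rw [Int.gcd_zero_left]; omega
  exact (Nat.le_of_dvd (by omega) (Int.gcd_dvd_natAbs_left u v)).trans (by omega)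

theorem sum_gcdDivMax_of_gcd_eq_le (Y g : ℕ) :
    ∑ p ∈ Icc (-(Y : ℤ)) Y ×ˢ Icc (-(Y : ℤ)) Y with Int.gcd p.1 p.2 = g, gcdDivMax p.1 p.2 ≤
      6 * (2 * (Y / g : ℕ) + 1) := by
  rcases Nat.eq_zero_or_pos g with rfl | hg
  · rw [sum_eq_zero fun p hp => by simp [gcdDivMax, (mem_filter.1 hp).2]]
    positivity
  have hg' : (0 : ℤ) < g := by exact_mod_cast hg
  let φ : ℤ × ℤ → ℤ × ℤ := fun p => (p.1 / g, p.2 / g)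
  have hdvd : ∀ p ∈ {p ∈ Icc (-(Y : ℤ)) Y ×ˢ Icc (-(Y : ℤ)) Y | Int.gcd p.1 p.2 = g},
      (g : ℤ) ∣ p.1 ∧ (g : ℤ) ∣ p.2 := fun p hp => by
    rw [← (mem_filter.1 hp).2]; exact ⟨Int.gcd_dvd_left _ _, Int.gcd_dvd_right _ _⟩
  have hinj : Set.InjOn φ
      ({p ∈ Icc (-(Y : ℤ)) Y ×ˢ Icc (-(Y : ℤ)) Y | Int.gcd p.1 p.2 = g} : Finset (ℤ × ℤ)) := by
    intro p hp p' hp' h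
    obtain ⟨h₁, h₂⟩ := hdvd p hp
    obtain ⟨h₁', h₂'⟩ := hdvd p' hp'
    simp only [φ, Prod.mk.injEq] at h
    refine Prod.ext ?_ ?_
    · rw [← Int.mul_ediv_cancel' h₁, ← Int.mul_ediv_cancel' h₁', h.1]
    · rw [← Int.mul_ediv_cancel' h₂, ← Int.mul_ediv_cancel' h₂', h.2]
  have hbound : ∀ {a : ℤ}, a ∈ Icc (-(Y : ℤ)) Y → (g : ℤ) ∣ a →
      a / g ∈ Icc (-((Y / g : ℕ) : ℤ)) (Y / g : ℕ) := by
    intro a ha hga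
    rw [mem_Icc, ← abs_le, Int.natCast_div, Int.le_ediv_iff_mul_le hg']
    calc |a / g| * g = |a / g * g| := by rw [abs_mul, abs_of_pos hg']
      _ = |a| := by rw [Int.ediv_mul_cancel hga]
      _ ≤ Y := abs_le.2 (mem_Icc.1 ha)
  calc _ = ∑ p ∈ Icc (-(Y : ℤ)) Y ×ˢ Icc (-(Y : ℤ)) Y with Int.gcd p.1 p.2 = g,
        ((max |(φ p).1| |(φ p).2| : ℤ) : ℝ)⁻¹ :=
        sum_congr rfl fun p hp => by rw [gcdDivMax_eq_inv, (mem_filter.1 hp).2]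
    _ = ∑ q ∈ {p ∈ Icc (-(Y : ℤ)) Y ×ˢ Icc (-(Y : ℤ)) Y | Int.gcd p.1 p.2 = g}.image φ,
        ((max |q.1| |q.2| : ℤ) : ℝ)⁻¹ :=
        (sum_image (f := fun q : ℤ × ℤ => ((max |q.1| |q.2| : ℤ) : ℝ)⁻¹) hinj).symm
    _ ≤ ∑ q ∈ Icc (-((Y / g : ℕ) : ℤ)) (Y / g : ℕ) ×ˢ Icc (-((Y / g : ℕ) : ℤ)) (Y / g : ℕ),
        ((max |q.1| |q.2| : ℤ) : ℝ)⁻¹ := by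
        refine sum_le_sum_of_subset_of_nonneg (fun q hq => ?_) fun _ _ _ => by positivity
        obtain ⟨p, hp, rfl⟩ := mem_image.1 hq
        have hpP := mem_product.1 (mem_filter.1 hp).1
        exact mem_product.2 ⟨hbound hpP.1 (hdvd p hp).1, hbound hpP.2 (hdvd p hp).2⟩
    _ ≤ _ := sum_inv_max_abs_le _

theorem sum_gcdDivMax_le (Y : ℕ) :
    ∑ p ∈ Icc (-(Y : ℤ)) Y ×ˢ Icc (-(Y : ℤ)) Y, gcdDivMax p.1 p.2 ≤
      12 * Y * (1 + Real.log Y) + 6 * (Y + 1) := by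
  have hmaps : ∀ p ∈ Icc (-(Y : ℤ)) Y ×ˢ Icc (-(Y : ℤ)) Y, Int.gcd p.1 p.2 ∈ range (Y + 1) :=
    fun p hp => by
      rw [mem_product, mem_Icc, mem_Icc] at hp
      exact mem_range.2 (Nat.lt_succ_of_le
        (Int.gcd_le_of_abs_le (abs_le.2 hp.1) (abs_le.2 hp.2)))
  have hharmonic : ∑ g ∈ range (Y + 1), ((g : ℝ))⁻¹ = harmonic Y := by
    rw [sum_range_succ', harmonic]; push_cast; simp
  rw [← sum_fiberwise_of_maps_to hmaps]
  calc _ ≤ ∑ g ∈ range (Y + 1), (12 * Y * (g : ℝ)⁻¹ + 6) := by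
        refine sum_le_sum fun g _ => (sum_gcdDivMax_of_gcd_eq_le Y g).trans ?_
        have := Nat.cast_div_le (m := Y) (n := g) (α := ℝ)
        rw [div_eq_mul_inv] at this
        linarith
    _ = 12 * Y * harmonic Y + 6 * (Y + 1) := by
        rw [sum_add_distrib, ← mul_sum, hharmonic, sum_const, card_range, nsmul_eq_mul]
        push_cast; ring
    _ ≤ _ := by gcongr; exact harmonic_le_one_add_log Y

theorem Matrix.sum_gcdDivMax_vecMul_le {ι κ : Type*} [Fintype ι] [DecidableEq ι]
    (D : Matrix ι κ ℤ) {i₁ i₂ : ι} {j₁ j₂ : κ} (hD : D i₁ j₁ * D i₂ j₂ - D i₁ j₂ * D i₂ j₁ ≠ 0)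
    {K : ℕ} (hK : ∀ j, ∑ i, |D i j| ≤ K) (B : ℕ) :
    ∑ x ∈ Fintype.piFinset (fun _ => Icc (-(B : ℤ)) B),
        gcdDivMax ((x ᵥ* D) j₁) ((x ᵥ* D) j₂) ≤
      (2 * B + 1) ^ (Fintype.card ι - 2) * ∑ p ∈ Icc (-((K * B : ℕ) : ℤ)) (K * B : ℕ) ×ˢ
        Icc (-((K * B : ℕ) : ℤ)) (K * B : ℕ), gcdDivMax p.1 p.2 := by
  set s := Fintype.piFinset (fun _ : ι => Icc (-(B : ℤ)) B)
  set Q := Icc (-((K * B : ℕ) : ℤ)) (K * B : ℕ) ×ˢ Icc (-((K * B : ℕ) : ℤ)) (K * B : ℕ)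
  let φ : (ι → ℤ) → ℤ × ℤ := fun x => ((x ᵥ* D) j₁, (x ᵥ* D) j₂)
  have hmaps : ∀ x ∈ s, φ x ∈ Q := fun x hx => by
    have hx' : ∀ i, |x i| ≤ B := fun i => abs_le.2 (mem_Icc.1 (Fintype.mem_piFinset.1 hx i))
    have hbound : ∀ j, (x ᵥ* D) j ∈ Icc (-((K * B : ℕ) : ℤ)) (K * B : ℕ) := fun j => by
      rw [mem_Icc, ← abs_le]
      refine (D.abs_vecMul_le hx' j).trans ?_
      push_cast
      rw [mul_comm]
      exact mul_le_mul_of_nonneg_right (hK j) (by positivity)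
    exact mem_product.2 ⟨hbound j₁, hbound j₂⟩
  have hfiber : ∀ p, (#{x ∈ s | φ x = p} : ℝ) ≤ (2 * B + 1) ^ (Fintype.card ι - 2) :=
    fun p => by
      have := D.card_filter_vecMul_eq_le hD (Icc (-(B : ℤ)) B) p
      rw [Int.card_Icc_neg_natCast] at this
      exact_mod_cast this
  calc ∑ x ∈ s, gcdDivMax (φ x).1 (φ x).2
      = ∑ p ∈ s.image φ, #{x ∈ s | φ x = p} • gcdDivMax p.1 p.2 :=
        sum_comp (fun p : ℤ × ℤ => gcdDivMax p.1 p.2) φ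
    _ ≤ ∑ p ∈ s.image φ, (2 * B + 1) ^ (Fintype.card ι - 2) * gcdDivMax p.1 p.2 := by
        refine sum_le_sum fun p _ => ?_
        rw [nsmul_eq_mul]
        exact mul_le_mul_of_nonneg_right (hfiber p) (gcdDivMax_nonneg _ _)
    _ ≤ ∑ p ∈ Q, (2 * B + 1) ^ (Fintype.card ι - 2) * gcdDivMax p.1 p.2 := by
        refine sum_le_sum_of_subset_of_nonneg (image_subset_iff.2 hmaps) fun _ _ _ =>
          mul_nonneg (by positivity) (gcdDivMax_nonneg _ _)
    _ = _ := by rw [mul_sum]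

theorem Matrix.card_vecMul_dotProduct_eq_zero_le {ι κ : Type*} [Fintype ι] [Fintype κ]
    [DecidableEq ι] [DecidableEq κ] (D : Matrix ι κ ℤ) {i₁ i₂ : ι} {j₁ j₂ : κ}
    (hD : D i₁ j₁ * D i₂ j₂ - D i₁ j₂ * D i₂ j₁ ≠ 0) {K : ℕ} (hK : ∀ j, ∑ i, |D i j| ≤ K)
    (B : ℕ) :
    (#{p ∈ (Fintype.piFinset fun _ : ι => Icc (-(B : ℤ)) B) ×ˢ
        (Fintype.piFinset fun _ : κ => Icc (-(B : ℤ)) B) | p.1 ᵥ* D ⬝ᵥ p.2 = 0} : ℝ) ≤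
      (2 * B + 1) ^ (Fintype.card ι - 2) * (2 * B + 1) ^ (Fintype.card κ - 2) *
        (2 * B * (12 * (K * B) * (1 + Real.log (K * B)) + 6 * (K * B + 1)) +
          3 * (2 * B + 1) ^ 2) := by
  have hj : j₁ ≠ j₂ := by rintro rfl; exact hD (by ring)
  have hι : 1 < Fintype.card ι :=
    Fintype.one_lt_card_iff.2 ⟨i₁, i₂, by rintro rfl; exact hD (by ring)⟩
  have hκ : 1 < Fintype.card κ := Fintype.one_lt_card_iff.2 ⟨j₁, j₂, hj⟩
  have hzero :=
    Nat.cast_le (α := ℝ) |>.2 (D.card_filter_vecMul_eq_le hD (Icc (-(B : ℤ)) B) 0)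
  have hG := (D.sum_gcdDivMax_vecMul_le hD hK B).trans
    (mul_le_mul_of_nonneg_left (sum_gcdDivMax_le (K * B)) (by positivity))
  have hbox := congrArg (Nat.cast (R := ℝ)) (card_piFinset_Icc_neg_natCast ι B)
  push_cast [Int.card_Icc_neg_natCast] at hzero hbox hG
  set n : ℝ := 2 * B + 1
  set box : Finset ℤ := Icc (-(B : ℤ)) B
  set a := Fintype.card ι
  set b := Fintype.card κ
  have hna : n ^ a = n ^ (a - 2) * n ^ 2 := by rw [← pow_add]; congr 1; omega
  have hnb : n ^ b = n ^ (b - 2) * n ^ 2 := by rw [← pow_add]; congr 1; omega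
  rw [card_filter_product_eq_sum (P := fun x y => x ᵥ* D ⬝ᵥ y = 0), Nat.cast_sum]
  calc _ ≤ ∑ x ∈ Fintype.piFinset fun _ : ι => box,
        (n ^ (b - 2) * (2 * B * gcdDivMax ((x ᵥ* D) j₁) ((x ᵥ* D) j₂) + 2) +
          if ((x ᵥ* D) j₁, (x ᵥ* D) j₂) = 0 then n ^ b else 0) :=
        sum_le_sum fun x _ => card_dotProduct_eq_zero_le (x ᵥ* D) hj B
    _ = n ^ (b - 2) * 2 * B * ∑ x ∈ Fintype.piFinset fun _ : ι => box,
          gcdDivMax ((x ᵥ* D) j₁) ((x ᵥ* D) j₂) + 2 * n ^ (b - 2) * n ^ a +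
        #{x ∈ Fintype.piFinset fun _ : ι => box | ((x ᵥ* D) j₁, (x ᵥ* D) j₂) = 0} * n ^ b := by
        rw [sum_add_distrib, ← sum_filter, sum_const, nsmul_eq_mul]
        congr 1
        rw [← hbox, mul_sum, mul_comm (2 * n ^ (b - 2)), ← nsmul_eq_mul, ← sum_const,
          ← sum_add_distrib]
        exact sum_congr rfl fun x _ => by ring
    _ ≤ n ^ (b - 2) * 2 * B * (n ^ (a - 2) *
          (12 * (K * B) * (1 + Real.log (K * B)) + 6 * (K * B + 1))) +
          2 * n ^ (b - 2) * n ^ a + n ^ (a - 2) * n ^ b := by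
        gcongr
    _ = _ := by rw [hna, hnb]; ring

theorem one_add_log_mul_le {a b : ℝ} (ha : 1 ≤ a) (hb : 1 ≤ b) :
    1 + Real.log (a * b) ≤ (1 + Real.log a) * (1 + Real.log b) := by
  rw [Real.log_mul (by positivity) (by positivity)]
  nlinarith [Real.log_nonneg ha, Real.log_nonneg hb]

theorem Matrix.exists_card_vecMul_dotProduct_eq_zero_le {ι κ : Type*} [Fintype ι] [Fintype κ]
    [DecidableEq ι] [DecidableEq κ] (D : Matrix ι κ ℤ) {i₁ i₂ : ι} {j₁ j₂ : κ}
    (hD : D i₁ j₁ * D i₂ j₂ - D i₁ j₂ * D i₂ j₁ ≠ 0) :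
    ∃ c > 0, ∀ B : ℕ, 1 ≤ B →
      (#{p ∈ (Fintype.piFinset fun _ : ι => Icc (-(B : ℤ)) B) ×ˢ
          (Fintype.piFinset fun _ : κ => Icc (-(B : ℤ)) B) | p.1 ᵥ* D ⬝ᵥ p.2 = 0} : ℝ) ≤
        c * (2 * B + 1) ^ (Fintype.card ι + Fintype.card κ - 2) * (1 + Real.log B) := by
  set K : ℕ := ∑ i, ∑ j, (D i j).natAbs + 1
  have hK : ∀ j, ∑ i, |D i j| ≤ K := fun j => by
    push_cast [K]
    calc ∑ i, |D i j| ≤ ∑ i, ∑ j, |D i j| := sum_le_sum fun i _ =>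
          single_le_sum (f := fun j => |D i j|) (fun _ _ => abs_nonneg _) (mem_univ j)
      _ ≤ _ := le_add_of_nonneg_right zero_le_one
  have hK1 : (1 : ℝ) ≤ K := by exact_mod_cast Nat.le_add_left 1 _
  refine ⟨48 * K * (1 + Real.log K) + 3, by positivity, fun B hB => ?_⟩
  have hB1 : (1 : ℝ) ≤ B := by exact_mod_cast hB
  have hKB : (1 : ℝ) ≤ K * B := one_le_mul_of_one_le_of_one_le hK1 hB1
  have hlog := one_add_log_mul_le hK1 hB1
  have hsum : 12 * (K * B) * (1 + Real.log (K * B)) + 6 * (K * B + 1) ≤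
      24 * K * B * ((1 + Real.log K) * (1 + Real.log B)) := by
    have := Real.log_nonneg hKB
    calc _ ≤ 24 * (K * B : ℝ) * (1 + Real.log (K * B)) := by nlinarith
      _ ≤ _ := by rw [mul_assoc 24 (K : ℝ)]; gcongr
  have hι : 1 < Fintype.card ι :=
    Fintype.one_lt_card_iff.2 ⟨i₁, i₂, by rintro rfl; exact hD (by ring)⟩
  have hκ : 1 < Fintype.card κ :=
    Fintype.one_lt_card_iff.2 ⟨j₁, j₂, by rintro rfl; exact hD (by ring)⟩
  have hpow : (2 * B + 1 : ℝ) ^ (Fintype.card ι + Fintype.card κ - 2) =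
      (2 * B + 1) ^ (Fintype.card ι - 2) * (2 * B + 1) ^ (Fintype.card κ - 2) *
        (2 * B + 1) ^ 2 := by
    rw [← pow_add, ← pow_add]; congr 1; omega
  refine (D.card_vecMul_dotProduct_eq_zero_le hD hK B).trans ?_
  have hBn : (B : ℝ) ^ 2 ≤ (2 * B + 1) ^ 2 := by gcongr; linarith
  have key : 2 * B * (12 * (K * B) * (1 + Real.log (K * B)) + 6 * (K * B + 1)) +
      3 * (2 * B + 1) ^ 2 ≤
        (48 * K * (1 + Real.log K) + 3) * (2 * B + 1) ^ 2 * (1 + Real.log B) :=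
    calc _ ≤ 48 * K * (1 + Real.log K) * B ^ 2 * (1 + Real.log B) + 3 * (2 * B + 1) ^ 2 := by
          nlinarith [mul_le_mul_of_nonneg_left hsum (by positivity : (0 : ℝ) ≤ 2 * B)]
      _ ≤ 48 * K * (1 + Real.log K) * (2 * B + 1) ^ 2 * (1 + Real.log B) +
            3 * (2 * B + 1) ^ 2 * (1 + Real.log B) := by
          refine add_le_add ?_ (le_mul_of_one_le_right (by positivity) ?_)
          · gcongr
          · linarith [Real.log_nonneg hB1]
      _ = _ := by ring
  rw [hpow]
  calc _ ≤ (2 * B + 1 : ℝ) ^ (Fintype.card ι - 2) * (2 * B + 1) ^ (Fintype.card κ - 2) *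
        ((48 * K * (1 + Real.log K) + 3) * (2 * B + 1) ^ 2 * (1 + Real.log B)) :=
        mul_le_mul_of_nonneg_left key (by positivity)
    _ = _ := by ring

theorem pow_mul_one_add_log_floor_le {X : ℝ} (hX : 2 ≤ X) (d : ℕ) :
    (2 * ⌊X⌋₊ + 1 : ℝ) ^ d * (1 + Real.log ⌊X⌋₊) ≤
      3 ^ d * (1 + (Real.log 2)⁻¹) * X ^ d * Real.log X := by
  have hB : (1 : ℝ) ≤ ⌊X⌋₊ := by exact_mod_cast Nat.le_floor (by norm_num; linarith)
  have hBX : (⌊X⌋₊ : ℝ) ≤ X := Nat.floor_le (by linarith)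
  have hlog2 : 0 < Real.log 2 := Real.log_pos one_lt_two
  have hlogX : Real.log 2 ≤ Real.log X := Real.log_le_log two_pos hX
  calc _ ≤ (3 * X) ^ d * (1 + Real.log X) := by
        gcongr
        linarith
    _ ≤ (3 * X) ^ d * ((1 + (Real.log 2)⁻¹) * Real.log X) := by
        gcongr
        have : 1 ≤ (Real.log 2)⁻¹ * Real.log X := by
          rw [inv_mul_eq_div, le_div_iff₀ hlog2]; linarith
        linarith
    _ = _ := by rw [mul_pow]; ring

/-- If `C` is a `k × m` rational matrix with `rank(C) ≥ 2`, then the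
number of integer pairs `x, y` with `|x| ≤ X`, `|y| ≤ X` and `xᵀCy = 0` is
`≪_C X^{k+m-2} log X`. -/
theorem statement13 {k m : ℕ} (C : Matrix (Fin k) (Fin m) ℚ) (hrank : 2 ≤ C.rank) :
    ∃ c : ℝ, 0 < c ∧ ∀ X : ℝ, 2 ≤ X →
      ((((Fintype.piFinset fun _ : Fin k => Finset.Icc (-⌊X⌋) ⌊X⌋) ×ˢ
          (Fintype.piFinset fun _ : Fin m => Finset.Icc (-⌊X⌋) ⌊X⌋)).filter
            (fun p : (Fin k → ℤ) × (Fin m → ℤ) =>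
              ∑ i, ∑ j, C i j * (p.1 i : ℚ) * (p.2 j : ℚ) = 0)).card : ℝ) ≤
        c * X ^ ((k : ℝ) + (m : ℝ) - 2) * Real.log X := by
  obtain ⟨D, i₁, i₂, j₁, j₂, hD, hbilin⟩ := C.exists_int_minor_ne_zero_of_two_le_rank hrank
  obtain ⟨c, hc, hcount⟩ := D.exists_card_vecMul_dotProduct_eq_zero_le hD
  have hkm : 2 ≤ k + m := by
    have := C.rank_le_card_height; simp only [Fintype.card_fin] at this; omega
  refine ⟨c * (3 ^ (k + m - 2) * (1 + (Real.log 2)⁻¹)), by positivity, fun X hX => ?_⟩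
  have hfloor : ⌊X⌋ = (⌊X⌋₊ : ℤ) := (Int.natCast_floor_eq_floor (by linarith)).symm
  have hexp : X ^ ((k : ℝ) + (m : ℝ) - 2) = X ^ (k + m - 2) := by
    rw [← Real.rpow_natCast]; push_cast [Nat.cast_sub hkm]; ring_nf
  rw [hfloor, Finset.filter_congr fun p _ => hbilin p.1 p.2, hexp]
  refine (hcount _ (Nat.le_floor (by norm_num; linarith))).trans ?_
  rw [Fintype.card_fin, Fintype.card_fin]
  calc _ = c * ((2 * ⌊X⌋₊ + 1 : ℝ) ^ (k + m - 2) * (1 + Real.log ⌊X⌋₊)) := by ring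
    _ ≤ c * (3 ^ (k + m - 2) * (1 + (Real.log 2)⁻¹) * X ^ (k + m - 2) * Real.log X) :=
        mul_le_mul_of_nonneg_left (pow_mul_one_add_log_floor_le hX _) hc.le
    _ = _ := by ring
end

section
/- Let A be an n×n symmetric matrix with rational entries, rank(A) ≥ 9, of the block form A = [[A₁, γ₁, (γ₂,γ₃)C], [γ₁ᵀ, a, υᵀ], [Cᵀ(γ₂,γ₃)ᵀ, υ, D + CᵀHC]], where A₁ is 3×3, γ₁ ∈ ℤ³, γ₂, γ₃ ∈ ℚ³ with (γ₁,γ₂,γ₃) ∈ GL₃(ℚ), a ∈ ℤ, C = (ξ₁,…,ξ_{n−4}) ∈ M_{2,n−4}(ℤ), υᵀ = (v₁,…,v_{n−4}) ∈ ℤ^{n−4}, H ∈ M_{2,2}(ℚ), and D = diag(d₁,…,d_{n−4}) is a rational diagonal matrix. Suppose additionally that rank(ξ₁,ξ₂) = 2. Then there exist pairwise distinct indices i, j, k, u with 1 ≤ i, j, k, u ≤ n−4 such that at least one of the following holds: (i) the 3×3 matrix R_{i,j,k} = [[ξ_i, ξ_j, ξ_k], [v_i, v_j, v_k]] (whose columns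 are (ξ_l, v_l)ᵀ ∈ ℚ³ for l = i, j, k) has rank 3 and d_u ≠ 0; (ii) rank(ξ_i, ξ_j) = 2 and d_k d_u ≠ 0. -/
/-!
For `d_l = 0` the row `l + 4` of `A` is `(ξ_l, v_l)ᵀ G` for a single `3 × n` matrix `G`
(by symmetry its entries are read off the blocks `Cᵀ(γ₂,γ₃)ᵀ`, `υ` and `CᵀHC`), so
`9 ≤ rank A ≤ 4 + #{l | d_l ≠ 0} + r`, where `r ≤ 3` is the rank of the vectors `(ξ_l, v_l)`
with `d_l = 0`. If two indices other than `1, 2` have `d ≠ 0`, they give (ii) together with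
`ξ₁, ξ₂`; otherwise at most three `d_l` are nonzero. If `r = 3`, three independent `(ξ_l, v_l)`
with `d_l = 0` and any `u` with `d_u ≠ 0` give (i). If `r ≤ 2`, then `d₁, d₂, d_s ≠ 0` for some
`s ≠ 1, 2`, and `r ≥ 2` forces some `ξ_l ≠ 0` with `d_l = 0`; such a `ξ_l` is independent of
`ξ₁` or of `ξ₂`, which gives (ii).
-/

open Finset Module Submodule

section LinearAlgebra

variable {K V W : Type*} [Field K] [AddCommGroup V] [Module K V] [AddCommGroup W] [Module K W]

theorem Matrix.rank_le_card_add_finrank_span_image {m n : Type*} [Fintype m] [Fintype n]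
    (M : Matrix m n K) (T : Finset m) (s : Set m) (hT : ∀ i ∉ T, i ∈ s) :
    M.rank ≤ #T + finrank K (span K (M.row '' s)) := by
  classical
  have hle : span K (Set.range M) ≤
      span K (T.image M.row : Set (n → K)) ⊔ span K (M.row '' s) := by
    rw [span_le]
    rintro _ ⟨i, rfl⟩
    by_cases hi : i ∈ T
    · exact mem_sup_left (subset_span (mem_coe.2 (mem_image_of_mem M.row hi)))
    · exact mem_sup_right (subset_span ⟨i, hT i hi, rfl⟩)
  calc M.rank = finrank K (span K (Set.range M)) := M.rank_eq_finrank_span_row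
    _ ≤ finrank K (span K (T.image M.row : Set (n → K))) + finrank K (span K (M.row '' s)) :=
      (finrank_mono hle).trans (finrank_add_le_finrank_add_finrank _ _)
    _ ≤ #T + finrank K (span K (M.row '' s)) := by
      gcongr
      exact (finrank_span_finset_le_card _).trans card_image_le

theorem finrank_span_image_le_of_eq_map {ι : Type*} [FiniteDimensional K V] (f : V →ₗ[K] W)
    {x : ι → V} {y : ι → W} {s : Set ι} (h : ∀ i ∈ s, y i = f (x i)) :
    finrank K (span K (y '' s)) ≤ finrank K (span K (x '' s)) := by
  rw [Set.image_congr h, ← Set.image_image f x, span_image]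
  exact finrank_map_le _ _

theorem exists_linearIndependent_comp_of_le_finrank {ι : Type*} [FiniteDimensional K V]
    (v : ι → V) (s : Set ι) {k : ℕ} (hk : k ≤ finrank K (span K (v '' s))) :
    ∃ t : Fin k → ι, (∀ l, t l ∈ s) ∧ LinearIndependent K (v ∘ t) := by
  obtain ⟨κ, a, -, hspan, hli⟩ := exists_linearIndependent' K (fun i : s => v i)
  have : Fintype κ := @Fintype.ofFinite κ hli.finite
  rw [Set.image_eq_range, ← hspan, ← Set.finrank,
    ← linearIndependent_iff_card_eq_finrank_span.1 hli] at hk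
  obtain ⟨e⟩ := Function.Embedding.nonempty_of_card_le (α := Fin k) (by simpa using hk)
  exact ⟨fun l => a (e l), fun l => (a (e l)).2, hli.comp e e.injective⟩

theorem LinearIndependent.pair_left_or_right {x y z : V} (hxy : LinearIndependent K ![x, y])
    (hz : z ≠ 0) : LinearIndependent K ![x, z] ∨ LinearIndependent K ![y, z] := by
  simp only [LinearIndependent.pair_symm_iff (x := _) (y := z), LinearIndependent.pair_iff' hz]
  by_contra! h
  obtain ⟨⟨a, rfl⟩, ⟨b, rfl⟩⟩ := h
  have hab := LinearIndependent.pair_iff.1 hxy b (-a) (by module)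
  simpa [neg_eq_zero.1 hab.2] using hxy.ne_zero 0

theorem Matrix.rank_eq_card_iff_linearIndependent_col {m n : Type*} [Fintype m] [Fintype n]
    (M : Matrix m n K) : M.rank = Fintype.card n ↔ LinearIndependent K M.col := by
  rw [linearIndependent_iff_card_eq_finrank_span, M.rank_eq_finrank_span_cols, eq_comm]
  rfl

end LinearAlgebra

section RankQuadruple

variable {ι : Type*} (C : Matrix (Fin 2) ι ℤ) (v : ι → ℤ) (d : ι → ℚ)

-- `xi C l` is the column `ξ_l` of `C`, and `xiv C v l` the column `(ξ_l, v_l)` of `R_{i,j,k}`.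
def xi (l : ι) : Fin 2 → ℚ := fun s => C s l

def xiv (l : ι) : Fin 3 → ℚ := ![C 0 l, C 1 l, v l]

def ExistsRankQuadruple : Prop :=
  ∃ i j k u : ι, i ≠ j ∧ i ≠ k ∧ i ≠ u ∧ j ≠ k ∧ j ≠ u ∧ k ≠ u ∧
    ((LinearIndependent ℚ (xiv C v ∘ ![i, j, k]) ∧ d u ≠ 0) ∨
      (LinearIndependent ℚ (xi C ∘ ![i, j]) ∧ d k ≠ 0 ∧ d u ≠ 0))

variable {C}

theorem finrank_span_xiv_le_one {s : Set ι} (hs : ∀ l ∈ s, xi C l = 0) :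
    finrank ℚ (span ℚ (xiv C v '' s)) ≤ 1 := by
  have hxiv : ∀ l ∈ s, xiv C v l = LinearMap.toSpanSingleton ℚ _ ![0, 0, 1] (v l : ℚ) := by
    intro l hl
    have h0 := congrFun (hs l hl) 0
    have h1 := congrFun (hs l hl) 1
    simp only [xi, Pi.zero_apply] at h0 h1
    ext t; fin_cases t <;> simp [xiv, h0, h1]
  calc finrank ℚ (span ℚ (xiv C v '' s))
      ≤ finrank ℚ (span ℚ ((fun l => (v l : ℚ)) '' s)) := finrank_span_image_le_of_eq_map _ hxiv
    _ ≤ 1 := (finrank_le _).trans (finrank_self ℚ).le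

theorem existsRankQuadruple_of_linearIndependent_pair {i j k u : ι} (hij : i ≠ j) (hik : i ≠ k)
    (hiu : i ≠ u) (hjk : j ≠ k) (hju : j ≠ u) (hku : k ≠ u)
    (hli : LinearIndependent ℚ ![xi C i, xi C j]) (hk : d k ≠ 0) (hu : d u ≠ 0) :
    ExistsRankQuadruple C v d := by
  refine ⟨i, j, k, u, hij, hik, hiu, hjk, hju, hku, Or.inr ⟨?_, hk, hu⟩⟩
  have hvec : xi C ∘ ![i, j] = ![xi C i, xi C j] := by ext l; fin_cases l <;> rfl
  rwa [hvec]

theorem existsRankQuadruple_of_three_le_finrank {u : ι} (hu : d u ≠ 0)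
    (h : 3 ≤ finrank ℚ (span ℚ (xiv C v '' {l | d l = 0}))) : ExistsRankQuadruple C v d := by
  obtain ⟨t, hZ, hli⟩ := exists_linearIndependent_comp_of_le_finrank (xiv C v) _ h
  have ht : Function.Injective t := hli.injective.of_comp
  have hu' : ∀ l, t l ≠ u := fun l h => hu (h ▸ hZ l)
  refine ⟨t 0, t 1, t 2, u, ht.ne (by decide), ht.ne (by decide), hu' 0, ht.ne (by decide),
    hu' 1, hu' 2, Or.inl ⟨?_, hu⟩⟩
  have hvec : ![t 0, t 1, t 2] = t := by ext l; fin_cases l <;> rfl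
  rwa [hvec]

theorem existsRankQuadruple_of_xi_ne_zero {e₀ e₁ s l : ι}
    (h01 : LinearIndependent ℚ ![xi C e₀, xi C e₁]) (hd₀ : d e₀ ≠ 0) (hd₁ : d e₁ ≠ 0)
    (hds : d s ≠ 0) (hs₀ : s ≠ e₀) (hs₁ : s ≠ e₁) (hdl : d l = 0) (hl : xi C l ≠ 0) :
    ExistsRankQuadruple C v d := by
  have h01' : e₀ ≠ e₁ := fun h => h01.injective.ne zero_ne_one (by simp [h])
  have hl₀ : e₀ ≠ l := fun h => hd₀ (h ▸ hdl)
  have hl₁ : e₁ ≠ l := fun h => hd₁ (h ▸ hdl)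
  have hls : l ≠ s := fun h => hds (h ▸ hdl)
  rcases h01.pair_left_or_right hl with h | h
  · exact existsRankQuadruple_of_linearIndependent_pair v d hl₀ h01' hs₀.symm hl₁.symm hls
      hs₁.symm h hd₁ hds
  · exact existsRankQuadruple_of_linearIndependent_pair v d hl₁ h01'.symm hs₁.symm hl₀.symm hls
      hs₀.symm h hd₀ hds

theorem existsRankQuadruple_of_le [Fintype ι] [DecidableEq ι] {e₀ e₁ : ι}
    (h01 : LinearIndependent ℚ ![xi C e₀, xi C e₁])
    (h : 5 ≤ #{l | d l ≠ 0} + finrank ℚ (span ℚ (xiv C v '' {l | d l = 0}))) :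
    ExistsRankQuadruple C v d := by
  set S : Finset ι := {l | d l ≠ 0}
  set r := finrank ℚ (span ℚ (xiv C v '' {l | d l = 0}))
  have h01' : e₀ ≠ e₁ := fun h => h01.injective.ne zero_ne_one (by simp [h])
  by_contra hne
  have hS' : #(S \ {e₀, e₁}) ≤ 1 := by
    refine card_le_one.2 fun k hk u hu => ?_
    by_contra hku
    simp only [S, mem_sdiff, mem_filter, mem_univ, true_and, mem_insert, mem_singleton,
      not_or] at hk hu
    exact hne (existsRankQuadruple_of_linearIndependent_pair v d h01' (Ne.symm hk.2.1)
      (Ne.symm hu.2.1) (Ne.symm hk.2.2) (Ne.symm hu.2.2) hku h01 hk.1 hu.1)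
  have hr3 : r ≤ 3 := (finrank_le _).trans (by simp)
  have hr2 : r ≤ 2 := by
    by_contra! hr
    obtain ⟨u, hu⟩ : S.Nonempty := card_pos.1 (by omega)
    exact hne (existsRankQuadruple_of_three_le_finrank v d (mem_filter.1 hu).2 hr)
  have hsplit := card_sdiff_add_card_inter S {e₀, e₁}
  have hinter_le : #(S ∩ {e₀, e₁}) ≤ 2 := (card_le_card inter_subset_right).trans card_le_two
  have hinter : S ∩ {e₀, e₁} = {e₀, e₁} := by
    refine eq_of_subset_of_card_le inter_subset_right ?_
    rw [card_pair h01']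
    omega
  have hd₀ : d e₀ ≠ 0 := (mem_filter.1 (inter_eq_right.1 hinter (by simp))).2
  have hd₁ : d e₁ ≠ 0 := (mem_filter.1 (inter_eq_right.1 hinter (by simp))).2
  obtain ⟨s, hs⟩ : (S \ {e₀, e₁}).Nonempty := card_pos.1 (by omega)
  simp only [S, mem_sdiff, mem_filter, mem_univ, true_and, mem_insert, mem_singleton,
    not_or] at hs
  obtain ⟨l, hdl, hl⟩ : ∃ l ∈ {l | d l = 0}, xi C l ≠ 0 := by
    by_contra! h0
    have := finrank_span_xiv_le_one v h0
    omega
  exact hne (existsRankQuadruple_of_xi_ne_zero v d h01 hd₀ hd₁ hs.1 hs.2.1 hs.2.2 hdl hl)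

end RankQuadruple

section BlockMatrix

open Matrix

variable {n : ℕ}

def rowFactor (γ₂ γ₃ : Fin 3 → ℚ) (C : Matrix (Fin 2) (Fin (n - 4)) ℤ)
    (H : Matrix (Fin 2) (Fin 2) ℚ) : Matrix (Fin 3) (Fin n) ℚ :=
  Matrix.of fun t j =>
    if hj : (j : ℕ) < 3 then ![γ₂ ⟨j, hj⟩, γ₃ ⟨j, hj⟩, 0] t
    else if hj' : 4 ≤ (j : ℕ) then
      ![(H *ᵥ xi C ⟨j - 4, by omega⟩) 0, (H *ᵥ xi C ⟨j - 4, by omega⟩) 1, 0] t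
    else ![0, 0, 1] t

theorem eq_vecMul_rowFactor {γ₂ γ₃ : Fin 3 → ℚ} {C : Matrix (Fin 2) (Fin (n - 4)) ℤ}
    {v : Fin (n - 4) → ℤ} {H : Matrix (Fin 2) (Fin 2) ℚ} {r : Fin n → ℚ} {l : Fin (n - 4)}
    (hlow : ∀ (j : Fin n) (hj : (j : ℕ) < 3),
      r j = γ₂ ⟨j, hj⟩ * (C 0 l : ℚ) + γ₃ ⟨j, hj⟩ * (C 1 l : ℚ))
    (hmid : ∀ j : Fin n, (j : ℕ) = 3 → r j = v l)
    (hhigh : ∀ (j : Fin n) (hj : 4 ≤ (j : ℕ)),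
      r j = ∑ s : Fin 2, ∑ u : Fin 2, (C s l : ℚ) * H s u * (C u ⟨j - 4, by omega⟩ : ℚ)) :
    r = xiv C v l ᵥ* rowFactor γ₂ γ₃ C H := by
  ext j
  simp only [Matrix.vecMul, dotProduct, Fin.sum_univ_three, rowFactor, Matrix.of_apply, xiv]
  by_cases hj : (j : ℕ) < 3
  · simp only [hlow j hj, hj, ↓reduceDIte, cons_val_zero, cons_val_one, Matrix.cons_val,
      mul_zero, add_zero]
    ring
  by_cases hj' : 4 ≤ (j : ℕ)
  · simp only [hhigh j hj', hj, hj', ↓reduceDIte, mulVec, dotProduct, xi, Fin.sum_univ_two,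
      cons_val_zero, cons_val_one, Matrix.cons_val, mul_zero, add_zero]
    ring
  · simp [hj, hj', hmid j (by omega)]

theorem rank_le_four_add_card_add_finrank_span_xiv (hn : 4 ≤ n)
    (A : Matrix (Fin n) (Fin n) ℚ) (hsymm : A.IsSymm)
    (γ₂ γ₃ : Fin 3 → ℚ)
    (C : Matrix (Fin 2) (Fin (n - 4)) ℤ) (v : Fin (n - 4) → ℤ)
    (H : Matrix (Fin 2) (Fin 2) ℚ) (d : Fin (n - 4) → ℚ)
    (hTop : ∀ (i j : Fin n) (hi : (i : ℕ) < 3) (hj : 4 ≤ (j : ℕ)),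
        A i j = γ₂ ⟨(i : ℕ), hi⟩ * (C 0 ⟨(j : ℕ) - 4, by omega⟩ : ℚ) +
          γ₃ ⟨(i : ℕ), hi⟩ * (C 1 ⟨(j : ℕ) - 4, by omega⟩ : ℚ))
    (hv : ∀ (j : Fin n) (hj : 4 ≤ (j : ℕ)),
        A ⟨3, by omega⟩ j = (v ⟨(j : ℕ) - 4, by omega⟩ : ℚ))
    (hD : ∀ (i j : Fin n) (hi : 4 ≤ (i : ℕ)) (hj : 4 ≤ (j : ℕ)),
        A i j = (if i = j then d ⟨(i : ℕ) - 4, by omega⟩ else 0) +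
          ∑ s : Fin 2, ∑ u : Fin 2,
            (C s ⟨(i : ℕ) - 4, by omega⟩ : ℚ) * H s u * (C u ⟨(j : ℕ) - 4, by omega⟩ : ℚ)) :
    A.rank ≤ 4 + #{l | d l ≠ 0} + finrank ℚ (span ℚ (xiv C v '' {l | d l = 0})) := by
  classical
  let e : Fin (n - 4) → Fin n := fun l => ⟨l + 4, by omega⟩
  have he : ∀ l h, (⟨(e l : ℕ) - 4, h⟩ : Fin (n - 4)) = l := fun l _ => Fin.ext (by simp [e])
  have hrow : ∀ l ∈ {l | d l = 0}, A (e l) = xiv C v l ᵥ* rowFactor γ₂ γ₃ C H := by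
    intro l (hl : d l = 0)
    refine eq_vecMul_rowFactor (fun j hj => ?_) (fun j hj => ?_) (fun j hj => ?_)
    · rw [hsymm.apply, hTop j (e l) hj (by simp [e]), he]
    · rw [show j = ⟨3, by omega⟩ from Fin.ext hj, hsymm.apply, hv (e l) (by simp [e]), he]
    · rw [hD (e l) j (by simp [e]) hj, he]
      split_ifs <;> simp [hl]
  set T : Finset (Fin n) := univ.image (Fin.castLE hn) ∪ ({l | d l ≠ 0} : Finset _).image e
  have hT : ∀ i ∉ T, i ∈ e '' {l | d l = 0} := by
    intro i hi
    simp only [T, mem_union, mem_image, mem_univ, true_and, mem_filter, not_or, not_exists,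
      not_and] at hi
    have hi4 : 4 ≤ (i : ℕ) := by
      by_contra! h
      exact hi.1 ⟨i, h⟩ rfl
    refine ⟨⟨i - 4, by omega⟩, by_contra fun h => hi.2 _ h (Fin.ext ?_), Fin.ext ?_⟩ <;>
      simp only [e] <;> omega
  calc A.rank ≤ #T + finrank ℚ (span ℚ (A.row '' (e '' {l | d l = 0}))) :=
        A.rank_le_card_add_finrank_span_image T _ hT
    _ ≤ 4 + #{l | d l ≠ 0} + finrank ℚ (span ℚ (xiv C v '' {l | d l = 0})) := by
      gcongr
      · refine (card_union_le _ _).trans (add_le_add ?_ card_image_le)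
        exact card_image_le.trans (by simp)
      · rw [Set.image_image]
        exact finrank_span_image_le_of_eq_map (rowFactor γ₂ γ₃ C H).vecMulLinear hrow

end BlockMatrix

theorem statement15 {n : ℕ} (hn : 9 ≤ n)
    (A : Matrix (Fin n) (Fin n) ℚ) (hsymm : A.IsSymm) (hrank : 9 ≤ A.rank)
    (γ₂ γ₃ : Fin 3 → ℚ)
    (C : Matrix (Fin 2) (Fin (n - 4)) ℤ) (v : Fin (n - 4) → ℤ)
    (H : Matrix (Fin 2) (Fin 2) ℚ) (d : Fin (n - 4) → ℚ)
    (hTop : ∀ (i j : Fin n) (hi : (i : ℕ) < 3) (hj : 4 ≤ (j : ℕ)),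
        A i j = γ₂ ⟨(i : ℕ), hi⟩ * (C 0 ⟨(j : ℕ) - 4, by omega⟩ : ℚ) +
          γ₃ ⟨(i : ℕ), hi⟩ * (C 1 ⟨(j : ℕ) - 4, by omega⟩ : ℚ))
    (hv : ∀ (j : Fin n) (hj : 4 ≤ (j : ℕ)),
        A ⟨3, by omega⟩ j = (v ⟨(j : ℕ) - 4, by omega⟩ : ℚ))
    (hD : ∀ (i j : Fin n) (hi : 4 ≤ (i : ℕ)) (hj : 4 ≤ (j : ℕ)),
        A i j = (if i = j then d ⟨(i : ℕ) - 4, by omega⟩ else 0) +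
          ∑ s : Fin 2, ∑ u : Fin 2,
            (C s ⟨(i : ℕ) - 4, by omega⟩ : ℚ) * H s u * (C u ⟨(j : ℕ) - 4, by omega⟩ : ℚ))
    (hξ : (Matrix.of fun s l : Fin 2 => (C s ⟨(l : ℕ), by omega⟩ : ℚ)).rank = 2) :
    ∃ i j k u : Fin (n - 4), i ≠ j ∧ i ≠ k ∧ i ≠ u ∧ j ≠ k ∧ j ≠ u ∧ k ≠ u ∧
      (((Matrix.of fun s l : Fin 3 =>
          ![(C 0 (![i, j, k] l) : ℚ), (C 1 (![i, j, k] l) : ℚ),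
            (v (![i, j, k] l) : ℚ)] s).rank = 3 ∧ d u ≠ 0) ∨
        ((Matrix.of fun s l : Fin 2 =>
          (C s (![i, j] l) : ℚ)).rank = 2 ∧ d k ≠ 0 ∧ d u ≠ 0)) := by
  have hbound := rank_le_four_add_card_add_finrank_span_xiv (by omega) A hsymm γ₂ γ₃ C v H d
    hTop hv hD
  have h01 : LinearIndependent ℚ ![xi C ⟨0, by omega⟩, xi C ⟨1, by omega⟩] := by
    have hcol := (Matrix.rank_eq_card_iff_linearIndependent_col _).1
      (hξ.trans (Fintype.card_fin 2).symm)
    have hvec : (Matrix.of fun s l : Fin 2 => (C s ⟨(l : ℕ), by omega⟩ : ℚ)).col =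
        ![xi C ⟨0, by omega⟩, xi C ⟨1, by omega⟩] := by
      ext l; fin_cases l <;> rfl
    rwa [hvec] at hcol
  obtain ⟨i, j, k, u, hij, hik, hiu, hjk, hju, hku, h⟩ :=
    existsRankQuadruple_of_le v d h01 (by omega)
  refine ⟨i, j, k, u, hij, hik, hiu, hjk, hju, hku, h.imp (And.imp_left fun hli => ?_)
    (And.imp_left fun hli => ?_)⟩
  · exact ((Matrix.rank_eq_card_iff_linearIndependent_col _).2 hli).trans (Fintype.card_fin 3)
  · exact ((Matrix.rank_eq_card_iff_linearIndependent_col _).2 hli).trans (Fintype.card_fin 2)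
end

section
/- Let A be an n×n symmetric matrix with rational entries, rank(A) ≥ 9, of the block form A = [[A₁, ΓC], [CᵀΓᵀ, D + CᵀHC]], where A₁ is 3×3, Γ = (γ₁,γ₂,γ₃) ∈ GL₃(ℚ), C = (ξ₁,…,ξ_{n−3}) ∈ M_{3,n−3}(ℤ), H ∈ M_{3,3}(ℚ), and D = diag(d₁,…,d_{n−3}) is a rational diagonal matrix. Suppose additionally that rank(ξ₁,ξ₂,ξ₃) = 3. Then there exist pairwise distinct indices u₁, u₂, u₃, u₄, u₅, u₆ with 1 ≤ u₁,…,u₆ ≤ n−3 such that rank(ξ_{u₁}, ξ_{u₂}, ξ_{u₃}) = 3 and d_{u₄} d_{u₅} d_{u₆} ≠ 0. -/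
open Finset

/-!
Write `ξ_l ∈ ℚ³` for the columns of `C` and `r₀ = dim span {ξ_l | d_l = 0}`. When `d_l = 0`,
column `l + 3` of `A` is `[[Γ], [CᵀH]] ξ_l`, so `9 ≤ rank A ≤ 3 + #{l | d_l ≠ 0} + r₀`. Since the
`ξ_l` span `ℚ³`, a basis of `span {ξ_l | d_l = 0}` made of such columns extends, by columns of `C`,
to a basis `ξ_{u₁}, ξ_{u₂}, ξ_{u₃}` of `ℚ³`; at most `3 - r₀` of its indices have `d ≠ 0`, which
leaves at least `(6 - r₀) - (3 - r₀) = 3` other indices with `d ≠ 0`.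
-/

section LinearAlgebra

open Module Submodule Set Matrix

theorem exists_finset_linearIndepOn_card_eq_finrank {K V ι : Type*} [DivisionRing K]
    [AddCommGroup V] [Module K V] [FiniteDimensional K V] [DecidableEq ι] {v : ι → V}
    (hv : span K (range v) = ⊤) (W : Finset ι) :
    ∃ J : Finset ι, #J = finrank K V ∧ LinearIndepOn K v ↑J ∧
      finrank K (span K (v '' (↑W)ᶜ)) ≤ #(J \ W) := by
  obtain ⟨J₀, hJ₀W, -, hspan₀, hli₀⟩ :=
    exists_linearIndepOn_extension (linearIndepOn_empty K v) (empty_subset (↑W)ᶜ)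
  obtain ⟨J, -, hJ₀J, hspan, hli⟩ := exists_linearIndepOn_extension hli₀ (subset_univ J₀)
  have : Finite J := hli.finite
  lift J to Finset ι using J.toFinite
  have : Finite J₀ := hli₀.finite
  lift J₀ to Finset ι using J₀.toFinite
  refine ⟨J, ?_, hli, ?_⟩
  · have hJtop : span K (v '' ↑J) = ⊤ := by
      rw [eq_top_iff, ← hv, ← image_univ]
      exact span_le.2 hspan
    rw [← finrank_top K V, ← hJtop, image_eq_range, finrank_span_eq_card hli]
    simp
  · have hspanW : span K (v '' (↑W)ᶜ) = span K (v '' ↑J₀) :=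
      span_eq_span hspan₀ (subset_span.trans (span_mono (image_mono hJ₀W)))
    rw [hspanW, image_eq_range, finrank_span_eq_card hli₀]
    simp only [Finset.coe_sort_coe, Fintype.card_coe]
    exact card_le_card fun j hj => mem_sdiff.2 ⟨by exact_mod_cast hJ₀J hj, hJ₀W hj⟩

variable {K m n : Type*} [Field K] [Fintype m] [Fintype n]

theorem Matrix.rank_le_card_add_finrank_span {k ι : Type*} [Fintype k] (A : Matrix m n K)
    (M : Matrix m k K) (w : ι → k → K) (Z : Set ι) (S : Finset n)
    (hS : ∀ j ∉ S, ∃ l ∈ Z, A.col j = M *ᵥ w l) :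
    A.rank ≤ #S + finrank K (span K (w '' Z)) := by
  have hcols : span K (range A.col) ≤
      span K (A.col '' ↑S) ⊔ (span K (w '' Z)).map M.mulVecLin := by
    refine span_le.2 (range_subset_iff.2 fun j => ?_)
    by_cases hj : j ∈ S
    · exact mem_sup_left (subset_span ⟨j, hj, rfl⟩)
    · obtain ⟨l, hl, hcol⟩ := hS j hj
      rw [hcol, ← mulVecLin_apply]
      exact mem_sup_right (mem_map_of_mem (subset_span ⟨l, hl, rfl⟩))
  calc A.rank = finrank K (span K (range A.col)) := A.rank_eq_finrank_span_cols
    _ ≤ finrank K ↥(span K (A.col '' ↑S) ⊔ (span K (w '' Z)).map M.mulVecLin) :=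
      Submodule.finrank_mono hcols
    _ ≤ finrank K (span K (A.col '' ↑S)) + finrank K ((span K (w '' Z)).map M.mulVecLin) :=
      finrank_add_le_finrank_add_finrank _ _
    _ ≤ #S + finrank K (span K (w '' Z)) := by
      refine add_le_add ?_ (finrank_map_le _ _)
      rw [image_eq_range]
      exact (finrank_range_le_card (R := K) fun j : S => A.col j).trans_eq (Fintype.card_coe S)

theorem Matrix.rank_eq_card_of_linearIndependent_col {N : Matrix m n K}
    (h : LinearIndependent K N.col) : N.rank = Fintype.card n := by
  rw [← rank_transpose]
  exact h.rank_matrix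

theorem Matrix.span_range_col_eq_top_of_rank_eq {N : Matrix m n K} (h : N.rank = Fintype.card m) :
    span K (range N.col) = ⊤ :=
  eq_top_of_finrank_eq <| by rw [← N.rank_eq_finrank_span_cols, h, finrank_fintype_fun_eq_card]

end LinearAlgebra

theorem exists_append_injective_of_disjoint {α : Type*} {J T : Finset α} {p q : ℕ}
    (hJ : #J = p) (hT : #T = q) (hJT : Disjoint J T) :
    ∃ (a : Fin p → α) (b : Fin q → α),
      Function.Injective (Fin.append a b) ∧ (∀ k, a k ∈ J) ∧ ∀ k, b k ∈ T := by
  let eJ := Fintype.equivFinOfCardEq ((Fintype.card_coe J).trans hJ)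
  let eT := Fintype.equivFinOfCardEq ((Fintype.card_coe T).trans hT)
  refine ⟨fun k => eJ.symm k, fun k => eT.symm k, Fin.append_injective_iff.2
    ⟨Subtype.val_injective.comp eJ.symm.injective, Subtype.val_injective.comp eT.symm.injective,
      fun k l h => disjoint_left.1 hJT (eJ.symm k).2 (h ▸ (eT.symm l).2)⟩,
    fun k => (eJ.symm k).2, fun k => (eT.symm k).2⟩

section BlockMatrix

open Matrix

variable {n : ℕ}

/-- The last `n - 3` columns of `A` are `[[ΓC], [D + CᵀHC]]`; the first three are unconstrained. -/
def HasBlockForm (A : Matrix (Fin n) (Fin n) ℚ) (Γ : Matrix (Fin 3) (Fin 3) ℚ)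
    (C : Matrix (Fin 3) (Fin (n - 3)) ℤ) (H : Matrix (Fin 3) (Fin 3) ℚ) (d : Fin (n - 3) → ℚ) :
    Prop :=
  (∀ (i j : Fin n) (hi : (i : ℕ) < 3) (hj : 3 ≤ (j : ℕ)),
    A i j = ∑ s : Fin 3, Γ ⟨(i : ℕ), hi⟩ s * (C s ⟨(j : ℕ) - 3, by omega⟩ : ℚ)) ∧
  ∀ (i j : Fin n) (hi : 3 ≤ (i : ℕ)) (hj : 3 ≤ (j : ℕ)),
    A i j = (if i = j then d ⟨(i : ℕ) - 3, by omega⟩ else 0) +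
      ∑ s : Fin 3, ∑ u : Fin 3,
        (C s ⟨(i : ℕ) - 3, by omega⟩ : ℚ) * H s u * (C u ⟨(j : ℕ) - 3, by omega⟩ : ℚ)

/-- `[[Γ], [CᵀH]]`: the last `n - 3` columns of `A` are `blockFactor Γ C H * C + [[0], [D]]`. -/
def blockFactor (Γ : Matrix (Fin 3) (Fin 3) ℚ) (C : Matrix (Fin 3) (Fin (n - 3)) ℤ)
    (H : Matrix (Fin 3) (Fin 3) ℚ) : Matrix (Fin n) (Fin 3) ℚ :=
  of fun i u => if h : (i : ℕ) < 3 then Γ ⟨i, h⟩ u else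
    ∑ s : Fin 3, (C s ⟨(i : ℕ) - 3, by omega⟩ : ℚ) * H s u

variable {A : Matrix (Fin n) (Fin n) ℚ} {Γ : Matrix (Fin 3) (Fin 3) ℚ}
  {C : Matrix (Fin 3) (Fin (n - 3)) ℤ} {H : Matrix (Fin 3) (Fin 3) ℚ} {d : Fin (n - 3) → ℚ}

theorem HasBlockForm.col_eq_blockFactor_mulVec (hA : HasBlockForm A Γ C H d) {j : Fin n}
    (hj : 3 ≤ (j : ℕ)) (hdj : d ⟨(j : ℕ) - 3, by omega⟩ = 0) :
    A.col j = blockFactor Γ C H *ᵥ (C.map (Int.cast : ℤ → ℚ)).col ⟨(j : ℕ) - 3, by omega⟩ := by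
  funext i
  simp only [col_apply, mulVec, dotProduct, blockFactor, of_apply, map_apply]
  by_cases hi : (i : ℕ) < 3
  · simp only [dif_pos hi, hA.1 i j hi hj]
  · have hdiag : (if i = j then d ⟨(i : ℕ) - 3, by omega⟩ else 0) = 0 := by
      split_ifs with hij
      · subst hij; exact hdj
      · rfl
    simp only [dif_neg hi, hA.2 i j (by omega) hj, hdiag, zero_add, Finset.sum_mul]
    exact Finset.sum_comm

theorem HasBlockForm.rank_le_three_add_card_add_finrank (hA : HasBlockForm A Γ C H d)
    (W : Finset (Fin (n - 3))) (hW : ∀ l ∉ W, d l = 0) :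
    A.rank ≤ 3 + #W +
      Module.finrank ℚ (Submodule.span ℚ ((C.map (Int.cast : ℤ → ℚ)).col '' (↑W)ᶜ)) := by
  classical
  set S : Finset (Fin n) := univ.filter (fun j : Fin n => (j : ℕ) < 3) ∪
    W.image fun l : Fin (n - 3) => (⟨(l : ℕ) + 3, by omega⟩ : Fin n)
  have hS : #S ≤ 3 + #W := by
    refine (card_union_le _ _).trans (add_le_add ?_ card_image_le)
    simpa using card_le_card_of_injOn Fin.val (t := range 3)
      (fun j hj => by simpa using hj) Fin.val_injective.injOn
  refine (rank_le_card_add_finrank_span A (blockFactor Γ C H) (C.map (Int.cast : ℤ → ℚ)).col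
    (↑W)ᶜ S fun j hjS => ?_).trans (by omega)
  have hj : 3 ≤ (j : ℕ) := by
    by_contra h
    exact hjS (mem_union_left _ (by simpa using h))
  have hlW : (⟨(j : ℕ) - 3, by omega⟩ : Fin (n - 3)) ∉ W := fun hl =>
    hjS (mem_union_right _ (mem_image.2 ⟨_, hl, Fin.ext (by simp; omega)⟩))
  exact ⟨_, hlW, hA.col_eq_blockFactor_mulVec hj (hW _ hlW)⟩

end BlockMatrix

/-- Lemma 5.13. Suppose the rational symmetric `n × n` matrix `A`, with
`rank(A) ≥ 9`, has the block form `[[A₁, ΓC], [CᵀΓᵀ, D + CᵀHC]]` with `Γ ∈ GL₃(ℚ)`,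
`C = (ξ₁,…,ξ_{n-3}) ∈ M_{3,n-3}(ℤ)`, `D = diag(d₁,…,d_{n-3})`, and `rank(ξ₁,ξ₂,ξ₃) = 3`.
Then there are pairwise distinct `u₁,…,u₆` with `rank(ξ_{u₁},ξ_{u₂},ξ_{u₃}) = 3` and
`d_{u₄} d_{u₅} d_{u₆} ≠ 0`. -/
theorem statement16 {n : ℕ} (hn : 9 ≤ n)
    (A : Matrix (Fin n) (Fin n) ℚ) (hrank : 9 ≤ A.rank)
    (Γ : Matrix (Fin 3) (Fin 3) ℚ)
    (C : Matrix (Fin 3) (Fin (n - 3)) ℤ)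
    (H : Matrix (Fin 3) (Fin 3) ℚ) (d : Fin (n - 3) → ℚ)
    (hTop : ∀ (i j : Fin n) (hi : (i : ℕ) < 3) (hj : 3 ≤ (j : ℕ)),
        A i j = ∑ s : Fin 3, Γ ⟨(i : ℕ), hi⟩ s * (C s ⟨(j : ℕ) - 3, by omega⟩ : ℚ))
    (hD : ∀ (i j : Fin n) (hi : 3 ≤ (i : ℕ)) (hj : 3 ≤ (j : ℕ)),
        A i j = (if i = j then d ⟨(i : ℕ) - 3, by omega⟩ else 0) +
          ∑ s : Fin 3, ∑ u : Fin 3,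
            (C s ⟨(i : ℕ) - 3, by omega⟩ : ℚ) * H s u * (C u ⟨(j : ℕ) - 3, by omega⟩ : ℚ))
    (hξ : (Matrix.of fun s l : Fin 3 => (C s ⟨(l : ℕ), by omega⟩ : ℚ)).rank = 3) :
    ∃ u : Fin 6 → Fin (n - 3), Function.Injective u ∧
      (Matrix.of fun s l : Fin 3 => (C s (![u 0, u 1, u 2] l) : ℚ)).rank = 3 ∧
      d (u 3) ≠ 0 ∧ d (u 4) ≠ 0 ∧ d (u 5) ≠ 0 := by
  classical
  set W : Finset (Fin (n - 3)) := {l | d l ≠ 0}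
  have hspan : Submodule.span ℚ (Set.range (C.map (Int.cast : ℤ → ℚ)).col) = ⊤ := by
    have hξspan := Matrix.span_range_col_eq_top_of_rank_eq (hξ.trans (Fintype.card_fin 3).symm)
    refine eq_top_mono (Submodule.span_mono ?_) hξspan
    exact Set.range_subset_iff.2 fun l => ⟨⟨l, by omega⟩, rfl⟩
  obtain ⟨J, hJ, hJli, hJW⟩ := exists_finset_linearIndepOn_card_eq_finrank hspan W
  rw [Module.finrank_fin_fun] at hJ
  have hAW := HasBlockForm.rank_le_three_add_card_add_finrank ⟨hTop, hD⟩ W (by simp [W])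
  have hWJ : 3 ≤ #(W \ J) := by
    have hW := card_sdiff_add_card_inter W J
    have hJ' := card_sdiff_add_card_inter J W
    rw [inter_comm] at hJ'
    omega
  obtain ⟨T, hTWJ, hT⟩ := exists_subset_card_eq hWJ
  obtain ⟨a, b, hinj, haJ, hbT⟩ :=
    exists_append_injective_of_disjoint hJ hT (disjoint_of_subset_right hTWJ disjoint_sdiff)
  have hd (k : Fin 3) : d (b k) ≠ 0 := by simpa [W] using (mem_sdiff.1 (hTWJ (hbT k))).1
  refine ⟨Fin.append a b, hinj, ?_, hd 0, hd 1, hd 2⟩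
  have hfirst : ![Fin.append a b 0, Fin.append a b 1, Fin.append a b 2] = a := by
    ext k; fin_cases k <;> rfl
  rw [hfirst]
  refine (Matrix.rank_eq_card_of_linearIndependent_col ?_).trans (Fintype.card_fin 3)
  exact hJli.comp (fun k => ⟨a k, haJ k⟩) fun k l h =>
    (Fin.append_injective_iff.1 hinj).1 (congrArg Subtype.val h)
end
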